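/- arXiv:math/0508495 — 7 statements merged into one kernel-verified Lean document; each statement's English description precedes it below -/
import Mathlib

section
/- Let A be a Banach algebra and A# its unitization. If A is non-unital and there exists a non-inner continuous derivation D : A → A*, then the map D₁ : A# → A* defined by D₁(a + α·1) = D(a) is a non-inner continuous derivation, and hence A# is not ideally amenable. -/
open NormedSpace

noncomputable section

variable {A : Type*} [NonUnitalNormedRing A] [NormedSpace ℂ A]
  [IsScalarTower ℂ A A] [SMulCommClass ℂ A A]

/-- A closed two-sided ideal of a Banach algebra, given as a closed submodule
stable under left and right multiplication. -/
structure IsClosedTwoSidedIdeal (I : Submodule ℂ A) : Prop where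
  isClosed : IsClosed (I : Set A)
  mul_left : ∀ (a : A) ⦃x : A⦄, x ∈ I → a * x ∈ I
  mul_right : ∀ (a : A) ⦃x : A⦄, x ∈ I → x * a ∈ I

/-- `D : A → I*` is a derivation for the canonical dual bimodule structure:
`⟨a·f, i⟩ = ⟨f, i a⟩` and `⟨f·a, i⟩ = ⟨f, a i⟩`, so that
`D(ab) = a·D(b) + D(a)·b` reads pointwise as below. -/
def IsIdealDerivation (I : Submodule ℂ A) (hI : IsClosedTwoSidedIdeal I)
    (D : A →L[ℂ] StrongDual ℂ I) : Prop :=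
  ∀ a b : A, ∀ i : I, D (a * b) i =
    D b ⟨(i : A) * a, hI.mul_right a i.2⟩ + D a ⟨b * (i : A), hI.mul_left b i.2⟩

/-- `D : A → I*` is inner: `D = δ_ξ`, i.e. `D a = a·ξ - ξ·a`. -/
def IsInnerIdealDerivation (I : Submodule ℂ A) (hI : IsClosedTwoSidedIdeal I)
    (D : A →L[ℂ] StrongDual ℂ I) : Prop :=
  ∃ ξ : StrongDual ℂ I, ∀ (a : A) (i : I),
    D a i = ξ ⟨(i : A) * a, hI.mul_right a i.2⟩ - ξ ⟨a * (i : A), hI.mul_left a i.2⟩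

/-- `A` is ideally amenable: for every closed two-sided ideal `I`,
every continuous derivation `A → I*` is inner. -/
def IdeallyAmenable (A : Type*) [NonUnitalNormedRing A] [NormedSpace ℂ A]
    [IsScalarTower ℂ A A] [SMulCommClass ℂ A A] : Prop :=
  ∀ (I : Submodule ℂ A) (hI : IsClosedTwoSidedIdeal I) (D : A →L[ℂ] StrongDual ℂ I),
    IsIdealDerivation I hI D → IsInnerIdealDerivation I hI D

/-! The ideal `ker fst` of `A#` is `A` itself, via `a ↦ (0, a)`, so its dual is `A*` and every
derivation `A# → A*` is a derivation into the dual of a closed ideal of `A#`. Since the unit acts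
trivially, `D₁ = D ∘ snd` is such a derivation, and an element of `A*` implementing `D₁` would
implement `D` on `A ⊆ A#`; so `D₁` is not inner and `A#` is not ideally amenable. -/

namespace Unitization

def sndL : Unitization ℂ A →L[ℂ] A :=
  ⟨sndHom ℂ ℂ A, Unitization.continuous_snd⟩

variable (A) in
def kerFst : Submodule ℂ (Unitization ℂ A) :=
  LinearMap.ker (fstHom ℂ A).toLinearMap

@[simp]
lemma mem_kerFst {u : Unitization ℂ A} : u ∈ kerFst A ↔ u.fst = 0 :=
  Iff.rfl

omit [IsScalarTower ℂ A A] [SMulCommClass ℂ A A] in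
lemma snd_mul_of_fst_eq_zero_left {x : Unitization ℂ A} (hx : x.fst = 0) (u : Unitization ℂ A) :
    (x * u).snd = x.snd * u.snd + u.fst • x.snd := by
  rw [snd_mul, hx, zero_smul, zero_add, add_comm]

omit [IsScalarTower ℂ A A] [SMulCommClass ℂ A A] in
lemma snd_mul_of_fst_eq_zero_right {x : Unitization ℂ A} (hx : x.fst = 0) (u : Unitization ℂ A) :
    (u * x).snd = u.snd * x.snd + u.fst • x.snd := by
  rw [snd_mul, hx, zero_smul, add_zero, add_comm]

section Regular

variable [RegularNormedAlgebra ℂ A]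

lemma isClosedTwoSidedIdeal_kerFst : IsClosedTwoSidedIdeal (kerFst A) where
  isClosed := isClosed_eq Unitization.continuous_fst continuous_const
  mul_left a x hx := by simp_all [fst_mul]
  mul_right a x hx := by simp_all [fst_mul]

def inrEquivKerFst : A ≃L[ℂ] kerFst A where
  toFun a := ⟨a, fst_inr ℂ a⟩
  invFun i := (i : Unitization ℂ A).snd
  map_add' a b := Subtype.ext (inr_add ℂ a b)
  map_smul' c a := Subtype.ext (inr_smul ℂ c a)
  left_inv := snd_inr ℂ
  right_inv i := Subtype.ext (Unitization.ext i.2.symm rfl)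
  continuous_toFun := continuous_inr.subtype_mk _
  continuous_invFun := Unitization.continuous_snd.comp continuous_subtype_val

@[simp]
lemma coe_inrEquivKerFst (a : A) : (inrEquivKerFst a : Unitization ℂ A) = a :=
  rfl

def dualEquivKerFst : StrongDual ℂ A ≃L[ℂ] StrongDual ℂ (kerFst A) :=
  inrEquivKerFst.arrowCongr (.refl ℂ ℂ)

@[simp]
lemma dualEquivKerFst_apply (f : StrongDual ℂ A) (i : kerFst A) :
    dualEquivKerFst f i = f (i : Unitization ℂ A).snd :=
  rfl

lemma apply_eq_dualEquivKerFst_symm_apply_snd (ξ : StrongDual ℂ (kerFst A)) (i : kerFst A) :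
    ξ i = dualEquivKerFst.symm ξ (i : Unitization ℂ A).snd :=
  congrArg ξ (inrEquivKerFst.apply_symm_apply i).symm

end Regular

end Unitization

open Unitization

omit [IsScalarTower ℂ A A] [SMulCommClass ℂ A A] in
theorem leibniz_comp_snd (D : A →L[ℂ] StrongDual ℂ A)
    (hD : ∀ a b x : A, D (a * b) x = D b (x * a) + D a (b * x)) (u v : Unitization ℂ A) (x : A) :
    D ((u * v).snd) x = D (v.snd) (x * u.snd + u.fst • x) + D (u.snd) (v.snd * x + v.fst • x) := by
  simp only [snd_mul, map_add, map_smul, hD, add_apply, smul_apply, smul_eq_mul]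
  ring

section Regular

variable [RegularNormedAlgebra ℂ A]

theorem isIdealDerivation_dualEquivKerFst_comp (D₁ : Unitization ℂ A →L[ℂ] StrongDual ℂ A)
    (hD₁ : ∀ (u v : Unitization ℂ A) (x : A),
      D₁ (u * v) x = D₁ v (x * u.snd + u.fst • x) + D₁ u (v.snd * x + v.fst • x)) :
    IsIdealDerivation (kerFst A) isClosedTwoSidedIdeal_kerFst
      (dualEquivKerFst.toContinuousLinearMap ∘L D₁) := by
  intro u v i
  simp only [ContinuousLinearMap.comp_apply, ContinuousLinearEquiv.coe_coe, dualEquivKerFst_apply,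
    snd_mul_of_fst_eq_zero_left i.2, snd_mul_of_fst_eq_zero_right i.2]
  exact hD₁ u v _

theorem exists_inner_of_isInnerIdealDerivation_dualEquivKerFst_comp
    (D₁ : Unitization ℂ A →L[ℂ] StrongDual ℂ A)
    (h : IsInnerIdealDerivation (kerFst A) isClosedTwoSidedIdeal_kerFst
      (dualEquivKerFst.toContinuousLinearMap ∘L D₁)) :
    ∃ ξ : StrongDual ℂ A, ∀ (u : Unitization ℂ A) (x : A),
      D₁ u x = ξ (x * u.snd + u.fst • x) - ξ (u.snd * x + u.fst • x) := by
  obtain ⟨ξ, hξ⟩ := h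
  refine ⟨dualEquivKerFst.symm ξ, fun u x => ?_⟩
  simpa [apply_eq_dualEquivKerFst_symm_apply_snd ξ, snd_mul_of_fst_eq_zero_left,
    snd_mul_of_fst_eq_zero_right] using hξ u (inrEquivKerFst x)

end Regular

theorem unitization_not_ideally_amenable_of_nonWeaklyAmenable_general
    [RegularNormedAlgebra ℂ A]
    (D : A →L[ℂ] StrongDual ℂ A)
    (hD : ∀ a b x : A, D (a * b) x = D b (x * a) + D a (b * x))
    (hDnotinner : ¬ ∃ ξ : StrongDual ℂ A, ∀ a x : A, D a x = ξ (x * a) - ξ (a * x)) :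
    (Continuous fun u : Unitization ℂ A => D (u.snd)) ∧
    (∀ u v : Unitization ℂ A, ∀ x : A,
      D ((u * v).snd) x =
        D (v.snd) (x * u.snd + u.fst • x) +
          D (u.snd) (v.snd * x + v.fst • x)) ∧
    (¬ ∃ ξ : StrongDual ℂ A, ∀ (u : Unitization ℂ A) (x : A),
      D (u.snd) x =
        ξ (x * u.snd + u.fst • x) -
          ξ (u.snd * x + u.fst • x)) ∧
    ¬ IdeallyAmenable (Unitization ℂ A) := by
  have hD₁ := leibniz_comp_snd D hD
  have hD₁_not_inner : ¬ ∃ ξ : StrongDual ℂ A, ∀ (u : Unitization ℂ A) (x : A),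
      D (u.snd) x = ξ (x * u.snd + u.fst • x) - ξ (u.snd * x + u.fst • x) :=
    fun ⟨ξ, hξ⟩ => hDnotinner ⟨ξ, fun a x => by simpa using hξ a x⟩
  refine ⟨D.continuous.comp Unitization.continuous_snd, hD₁, hD₁_not_inner, fun hA => ?_⟩
  exact hD₁_not_inner <| exists_inner_of_isInnerIdealDerivation_dualEquivKerFst_comp (D ∘L sndL) <|
    hA _ _ _ (isIdealDerivation_dualEquivKerFst_comp (D ∘L sndL) hD₁)

/-- If `A` is a non-unital Banach algebra and `D : A → A*` is a
non-inner continuous derivation, then `D₁ : A# → A*`, `D₁(a + α·1) = D(a)`, is a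
non-inner continuous derivation on the unitization, and hence `A#` is not ideally
amenable.  The `A#`-bimodule actions on `A*` are the natural extensions of the
`A`-actions: `⟨u·f, x⟩ = ⟨f, x·u⟩` with `x·u = x * u.snd + u.fst • x`, etc. -/
theorem unitization_not_ideally_amenable_of_nonWeaklyAmenable
    [CompleteSpace A] [RegularNormedAlgebra ℂ A]
    (hnonunital : ¬ ∃ e : A, ∀ a : A, e * a = a ∧ a * e = a)
    (D : A →L[ℂ] StrongDual ℂ A)
    (hD : ∀ a b x : A, D (a * b) x = D b (x * a) + D a (b * x))
    (hDnotinner : ¬ ∃ ξ : StrongDual ℂ A, ∀ a x : A, D a x = ξ (x * a) - ξ (a * x)) :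
    (Continuous fun u : Unitization ℂ A => D (u.snd)) ∧
    (∀ u v : Unitization ℂ A, ∀ x : A,
      D ((u * v).snd) x =
        D (v.snd) (x * u.snd + u.fst • x) +
          D (u.snd) (v.snd * x + v.fst • x)) ∧
    (¬ ∃ ξ : StrongDual ℂ A, ∀ (u : Unitization ℂ A) (x : A),
      D (u.snd) x =
        ξ (x * u.snd + u.fst • x) -
          ξ (u.snd * x + u.fst • x)) ∧
    ¬ IdeallyAmenable (Unitization ℂ A) :=
  unitization_not_ideally_amenable_of_nonWeaklyAmenable_general D hD hDnotinner
end
end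

section
/- A commutative Banach algebra is ideally amenable if and only if it is weakly amenable. -/
open NormedSpace

noncomputable section

variable {A : Type*} [NonUnitalNormedRing A] [NormedSpace ℂ A]
  [IsScalarTower ℂ A A] [SMulCommClass ℂ A A]

/-- `A` is weakly amenable: every continuous derivation `A → A*` is inner,
where `⟨a·f, x⟩ = ⟨f, x a⟩` and `⟨f·a, x⟩ = ⟨f, a x⟩`. -/
def WeaklyAmenable (A : Type*) [NonUnitalNormedRing A] [NormedSpace ℂ A]
    [IsScalarTower ℂ A A] [SMulCommClass ℂ A A] : Prop :=
  ∀ D : A →L[ℂ] StrongDual ℂ A,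
    (∀ a b x : A, D (a * b) x = D b (x * a) + D a (b * x)) →
    ∃ ξ : StrongDual ℂ A, ∀ a x : A, D a x = ξ (x * a) - ξ (a * x)

/-! In a commutative algebra `a·f = f·a` for every functional `f` on an ideal, so inner
derivations into `I*` vanish and both properties amount to "every continuous derivation is zero".
Taking `I = A` turns ideal amenability into weak amenability. Conversely, let `D : A → I*` be a
derivation. For `i ∈ I`, `c ↦ (y ↦ D c (y i))` is a derivation `A → A*`, hence zero, so `D` kills
`A·I`, and the Leibniz rule then gives `D (a b) = 0`. Finally a functional `l` vanishing on products
is zero, because `a ↦ l a • l` is then a derivation `A → A*`; applied to `a ↦ D a j` this gives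
`D = 0`. -/

theorem isClosedTwoSidedIdeal_top {A : Type*} [NonUnitalNormedRing A] [NormedSpace ℂ A] :
    IsClosedTwoSidedIdeal (⊤ : Submodule ℂ A) :=
  ⟨by simp, fun _ _ _ => Submodule.mem_top, fun _ _ _ => Submodule.mem_top⟩

theorem IsInnerIdealDerivation.eq_zero {A : Type*} [NonUnitalNormedCommRing A] [NormedSpace ℂ A]
    {I : Submodule ℂ A} {hI : IsClosedTwoSidedIdeal I} {D : A →L[ℂ] StrongDual ℂ I}
    (hD : IsInnerIdealDerivation I hI D) : D = 0 := by
  obtain ⟨ξ, hξ⟩ := hD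
  ext a i
  simp_rw [hξ, mul_comm (i : A) a, sub_self]
  rfl

section Commutative

variable {A : Type*} [NonUnitalNormedCommRing A] [NormedSpace ℂ A]
  [IsScalarTower ℂ A A] [SMulCommClass ℂ A A]

theorem WeaklyAmenable.derivation_eq_zero (hA : WeaklyAmenable A) {D : A →L[ℂ] StrongDual ℂ A}
    (hD : ∀ a b x : A, D (a * b) x = D b (x * a) + D a (b * x)) : D = 0 := by
  obtain ⟨ξ, hξ⟩ := hA D hD
  ext a x
  rw [hξ, mul_comm x a, sub_self]
  rfl

theorem WeaklyAmenable.eq_zero_of_map_mul_eq_zero (hA : WeaklyAmenable A) {l : StrongDual ℂ A}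
    (hl : ∀ a b : A, l (a * b) = 0) : l = 0 := by
  have hD : l.smulRight l = 0 := hA.derivation_eq_zero fun a b x => by simp [hl]
  ext x
  simpa using congr($hD x x)

theorem IdeallyAmenable.weaklyAmenable (hA : IdeallyAmenable A) : WeaklyAmenable A := by
  intro D hD
  let D' := (ContinuousLinearMap.precomp ℂ (Submodule.subtypeL ⊤)).comp D
  have hD' : IsIdealDerivation ⊤ isClosedTwoSidedIdeal_top D' := fun a b i => hD a b i
  refine ⟨0, fun a x => ?_⟩
  simpa [D'] using congr($((hA _ _ D' hD').eq_zero) a ⟨x, Submodule.mem_top⟩)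

namespace IsIdealDerivation

variable {I : Submodule ℂ A} {hI : IsClosedTwoSidedIdeal I} {D : A →L[ℂ] StrongDual ℂ I}

theorem apply_mul_eq_zero (hA : WeaklyAmenable A) (hD : IsIdealDerivation I hI D)
    (c x : A) (i : I) : D c ⟨x * i, hI.mul_left x i.2⟩ = 0 := by
  let μ : A →L[ℂ] I :=
    ((ContinuousLinearMap.mul ℂ A).flip i).codRestrict I fun y => hI.mul_left y i.2
  have hE : (ContinuousLinearMap.precomp ℂ μ).comp D = 0 := by
    refine hA.derivation_eq_zero fun a b y => ?_
    simp only [ContinuousLinearMap.comp_apply, ContinuousLinearMap.precomp_apply, hD a b (μ y)]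
    congr 2 <;> ext <;> simp [μ, mul_assoc, mul_left_comm]
  exact congr($hE c x)

theorem map_mul_eq_zero (hA : WeaklyAmenable A) (hD : IsIdealDerivation I hI D) (a b : A) :
    D (a * b) = 0 := by
  ext j
  have hja : (⟨j * a, hI.mul_right a j.2⟩ : I) = ⟨a * j, hI.mul_left a j.2⟩ :=
    Subtype.ext (mul_comm _ _)
  rw [hD a b j, hja, hD.apply_mul_eq_zero hA, hD.apply_mul_eq_zero hA, add_zero]
  rfl

theorem eq_zero (hA : WeaklyAmenable A) (hD : IsIdealDerivation I hI D) : D = 0 := by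
  ext a j
  have hl := hA.eq_zero_of_map_mul_eq_zero (l := (ContinuousLinearMap.apply ℂ ℂ j).comp D)
    fun a b => by simp [hD.map_mul_eq_zero hA a b]
  simpa using congr($hl a)

end IsIdealDerivation

theorem WeaklyAmenable.ideallyAmenable (hA : WeaklyAmenable A) : IdeallyAmenable A :=
  fun _ _ _ hD => ⟨0, fun a i => by simp [hD.eq_zero hA]⟩

end Commutative

theorem ideallyAmenable_iff_weaklyAmenable_of_comm_general
    {A : Type*} [NonUnitalNormedCommRing A] [NormedSpace ℂ A]
    [IsScalarTower ℂ A A] [SMulCommClass ℂ A A] :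
    IdeallyAmenable A ↔ WeaklyAmenable A :=
  ⟨IdeallyAmenable.weaklyAmenable, WeaklyAmenable.ideallyAmenable⟩

/-- A commutative Banach algebra is ideally amenable if and only
if it is weakly amenable. -/
theorem ideallyAmenable_iff_weaklyAmenable_of_comm
    {A : Type*} [NonUnitalNormedCommRing A] [NormedSpace ℂ A]
    [IsScalarTower ℂ A A] [SMulCommClass ℂ A A] [CompleteSpace A] :
    IdeallyAmenable A ↔ WeaklyAmenable A :=
  ideallyAmenable_iff_weaklyAmenable_of_comm_general
end
end

section
/- Let A be a Banach algebra with a bounded approximate identity and I a closed two-sided ideal of A. If the left module action π_l : A × I → I (given by multiplication) is Arens regular, then I* factors on the left, i.e., I* = I*·A. -/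
set_option maxHeartbeats 1000000
set_option synthInstance.maxHeartbeats 400000


open NormedSpace
open Filter Topology

noncomputable section

variable {A : Type*} [NonUnitalNormedRing A] [NormedSpace ℂ A]
  [IsScalarTower ℂ A A] [SMulCommClass ℂ A A]

/-- The transpose adjoint of a bounded bilinear map:
`⟨f*(z*, x), y⟩ = ⟨z*, f(x, y)⟩`. -/
def trAdj {X Y Z : Type*} [NormedAddCommGroup X] [NormedSpace ℂ X]
    [NormedAddCommGroup Y] [NormedSpace ℂ Y] [NormedAddCommGroup Z] [NormedSpace ℂ Z]
    (f : X →L[ℂ] Y →L[ℂ] Z) : StrongDual ℂ Z →L[ℂ] X →L[ℂ] StrongDual ℂ Y :=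
  (((ContinuousLinearMap.compL ℂ X (Y →L[ℂ] Z) (StrongDual ℂ Y)).comp
      (ContinuousLinearMap.compL ℂ Y Z ℂ)).flip) f

instance {E : Type*} [NormedAddCommGroup E] [NormedSpace ℂ E] :
    AddCommGroup (StrongDual ℂ (StrongDual ℂ E)) := inferInstance

/-- The first Arens extension `f*** = (((f*)*)*) : X** × Y** → Z**`. -/
def arens3 {X Y Z : Type*} [NormedAddCommGroup X] [NormedSpace ℂ X]
    [NormedAddCommGroup Y] [NormedSpace ℂ Y] [NormedAddCommGroup Z] [NormedSpace ℂ Z]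
    (f : X →L[ℂ] Y →L[ℂ] Z) :
    StrongDual ℂ (StrongDual ℂ X) →L[ℂ] StrongDual ℂ (StrongDual ℂ Y) →L[ℂ] StrongDual ℂ (StrongDual ℂ Z) :=
  trAdj (trAdj (trAdj f))

/-- `A` has a bounded approximate identity: a bounded net (indexed by a filter on `A`)
which is an approximate left and right identity. -/
def HasBAI (A : Type*) [NonUnitalNormedRing A] : Prop :=
  ∃ l : Filter A, l.NeBot ∧ (∃ C : ℝ, ∀ᶠ e in l, ‖e‖ ≤ C) ∧
    ∀ a : A, Filter.Tendsto (fun e => a * e) l (nhds a) ∧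
      Filter.Tendsto (fun e => e * a) l (nhds a)

/-- A weak-star continuous linear functional on a dual space is evaluation at a point. -/
lemma weakdual_rep {Y : Type*} [NormedAddCommGroup Y] [NormedSpace ℂ Y]
    (L : StrongDual ℂ Y →ₗ[ℂ] ℂ)
    (hL : Continuous fun m : WeakDual ℂ Y => L m) :
    ∃ z : Y, ∀ m : StrongDual ℂ Y, L m = m z := by
  have h0 : L 0 = 0 := map_zero L
  have hS : {m : WeakDual ℂ Y | ‖L m‖ < 1} ∈ 𝓝 (0 : WeakDual ℂ Y) := by
    have : IsOpen {m : WeakDual ℂ Y | ‖L m‖ < 1} := by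
      have : {m : WeakDual ℂ Y | ‖L m‖ < 1}
          = (fun m : WeakDual ℂ Y => L m) ⁻¹' (Metric.ball (0:ℂ) 1) := by
        ext m; simp [Metric.mem_ball, dist_eq_norm]
      rw [this]
      exact Metric.isOpen_ball.preimage hL
    exact this.mem_nhds (by show ‖L 0‖ < 1; simp [h0])
  -- unpack the induced (pointwise-convergence) topology
  have hnhds : 𝓝 (0 : WeakDual ℂ Y)
      = Filter.comap (fun (m : WeakDual ℂ Y) (y : Y) => m y) (𝓝 (fun _ => (0:ℂ))) := by
    exact nhds_induced _ _
  rw [hnhds, Filter.mem_comap] at hS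
  obtain ⟨T, hT, hTS⟩ := hS
  rw [nhds_pi] at hT
  rw [Filter.mem_pi] at hT
  obtain ⟨s, hsfin, t, ht, hst⟩ := hT
  -- key: vanishing on s implies vanishing of L
  have key : ∀ m : StrongDual ℂ Y, (∀ y ∈ s, m y = 0) → L m = 0 := by
    intro m hm
    have hall : ∀ c : ℂ, ‖L (c • m)‖ < 1 := by
      intro c
      apply hTS
      apply hst
      intro y hy
      have : (c • m) y = 0 := by simp [hm y hy]
      exact (congrArg (· ∈ t y) this).mpr (mem_of_mem_nhds (ht y))
    by_contra hne
    have hpos : 0 < ‖L m‖ := norm_pos_iff.mpr hne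
    have := hall ((2 / ‖L m‖ : ℝ) : ℂ)
    rw [map_smul, smul_eq_mul, norm_mul] at this
    simp only [Complex.norm_real, Real.norm_eq_abs] at this
    rw [abs_of_nonneg (by positivity)] at this
    rw [div_mul_cancel₀ _ (ne_of_gt hpos)] at this
    norm_num at this
  haveI : Finite s := hsfin.to_subtype
  have hker : ⨅ (i : s), LinearMap.ker ((topDualPairing ℂ Y).flip (i : Y)) ≤ LinearMap.ker L := by
    intro m hm
    simp only [Submodule.mem_iInf, LinearMap.mem_ker] at hm ⊢
    exact key m fun y hy => hm ⟨y, hy⟩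
  have hspan := mem_span_of_iInf_ker_le_ker (𝕜 := ℂ) hker
  haveI : Fintype s := hsfin.fintype
  obtain ⟨c, hc⟩ := (Submodule.mem_span_range_iff_exists_fun ℂ).1 hspan
  refine ⟨∑ i : s, c i • (i : Y), ?_⟩
  intro m
  rw [← hc]
  simp [topDualPairing_apply, LinearMap.sum_apply, LinearMap.smul_apply, map_sum, map_smul,
    smul_eq_mul]


/-- The unitization of `A` with the `ℓ¹` norm. -/
abbrev UA (A : Type*) [NonUnitalNormedRing A] [NormedSpace ℂ A]
    [IsScalarTower ℂ A A] [SMulCommClass ℂ A A] := WithLp 1 (Unitization ℂ A)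

def uf (u : UA A) : ℂ := (WithLp.equiv 1 (Unitization ℂ A) u).fst
def us (u : UA A) : A := (WithLp.equiv 1 (Unitization ℂ A) u).snd
def ui (a : A) : UA A := (WithLp.equiv 1 (Unitization ℂ A)).symm (Unitization.inr a)

@[simp] lemma uf_add (u v : UA A) : uf (u + v) = uf u + uf v := rfl
@[simp] lemma us_add (u v : UA A) : us (u + v) = us u + us v := rfl
@[simp] lemma uf_sub (u v : UA A) : uf (u - v) = uf u - uf v := rfl
@[simp] lemma us_sub (u v : UA A) : us (u - v) = us u - us v := rfl
@[simp] lemma uf_neg (u : UA A) : uf (-u) = -uf u := rfl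
@[simp] lemma us_neg (u : UA A) : us (-u) = -us u := rfl
@[simp] lemma uf_smul (c : ℂ) (u : UA A) : uf (c • u) = c * uf u := rfl
@[simp] lemma us_smul (c : ℂ) (u : UA A) : us (c • u) = c • us u := rfl
@[simp] lemma uf_one : uf (1 : UA A) = 1 := rfl
@[simp] lemma us_one : us (1 : UA A) = 0 := rfl
@[simp] lemma uf_zero : uf (0 : UA A) = 0 := rfl
@[simp] lemma us_zero : us (0 : UA A) = 0 := rfl
@[simp] lemma uf_mul (u v : UA A) : uf (u * v) = uf u * uf v := Unitization.fst_mul _ _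
@[simp] lemma us_mul (u v : UA A) :
    us (u * v) = uf u • us v + uf v • us u + us u * us v := Unitization.snd_mul _ _
@[simp] lemma uf_ui (a : A) : uf (ui a) = 0 := rfl
@[simp] lemma us_ui (a : A) : us (ui a) = a := rfl

lemma uext {u v : UA A} (h1 : uf u = uf v) (h2 : us u = us v) : u = v := by
  apply (WithLp.equiv 1 (Unitization ℂ A)).injective
  exact Unitization.ext h1 h2

lemma unorm (u : UA A) : ‖u‖ = ‖uf u‖ + ‖us u‖ := WithLp.unitization_norm_def u

@[simp] lemma ui_norm (a : A) : ‖(ui a : UA A)‖ = ‖a‖ := by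
  simp [unorm, uf, us, ui]

lemma uf_norm_le (u : UA A) : ‖uf u‖ ≤ ‖u‖ := by
  rw [unorm]; have := norm_nonneg (us u); linarith

lemma us_norm_le (u : UA A) : ‖us u‖ ≤ ‖u‖ := by
  rw [unorm]; have := norm_nonneg (uf u); linarith

instance : NormOneClass (UA A) := ⟨by rw [unorm]; simp⟩

/-- `uf` as a continuous linear map. -/
def ufL : UA A →L[ℂ] ℂ :=
  LinearMap.mkContinuous
    { toFun := uf, map_add' := fun _ _ => rfl, map_smul' := fun _ _ => rfl } 1
    (fun u => by rw [one_mul]; exact uf_norm_le u)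

/-- `us` as a continuous linear map. -/
def usL : UA A →L[ℂ] A :=
  LinearMap.mkContinuous
    { toFun := us, map_add' := fun _ _ => rfl, map_smul' := fun _ _ => rfl } 1
    (fun u => by rw [one_mul]; exact us_norm_le u)

@[simp] lemma ufL_apply (u : UA A) : ufL u = uf u := rfl
@[simp] lemma usL_apply (u : UA A) : usL u = us u := rfl

theorem cohen_factorization {X : Type*} [NormedAddCommGroup X] [NormedSpace ℂ X]
    [CompleteSpace X] [CompleteSpace A]
    (l : Filter A) [hnel : l.NeBot] {C : ℝ} (hC1 : 1 ≤ C) (hCb : ∀ᶠ e in l, ‖e‖ ≤ C)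
    (hmul : ∀ a : A, Tendsto (fun e => a * e) l (𝓝 a))
    (hmul' : ∀ a : A, Tendsto (fun e => e * a) l (𝓝 a))
    (sm : X →L[ℂ] A →L[ℂ] X)
    (hsm : ∀ (y : X) (a b : A), sm (sm y a) b = sm y (a * b))
    (hb : ∀ (y : X) (a : A), ‖sm y a‖ ≤ ‖y‖ * ‖a‖)
    (x : X) (hx : Tendsto (fun e => sm x e) l (𝓝 x)) :
    ∃ (a : A) (y : X), x = sm y a := by
  classical
  -- the action of the unitization
  set act : X → UA A → X := fun y u => uf u • y + sm y (us u) with hact_def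
  have hact_mul : ∀ (y : X) (u v : UA A), act y (u * v) = act (act y u) v := by
    intro y u v
    simp only [hact_def, uf_mul, us_mul, map_add, map_smul, ContinuousLinearMap.add_apply,
      ContinuousLinearMap.smul_apply, ← hsm y (us u) (us v)]
    module
  have hact_one : ∀ y : X, act y 1 = y := by
    intro y; simp [hact_def]
  have hact_ui : ∀ (y : X) (b : A), act y (ui b) = sm y b := by
    intro y b; simp [hact_def]
  have hact_smul : ∀ (y : X) (w : ℂ) (u : UA A), act y (w • u) = w • act y u := by
    intro y w u; simp [hact_def, smul_smul, smul_add, map_smul]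
  have hact_sub : ∀ (y : X) (u v : UA A), act y (u - v) = act y u - act y v := by
    intro y u v
    simp only [hact_def, uf_sub, us_sub, map_sub, sub_smul]
    abel
  have hact_norm : ∀ (y : X) (u : UA A), ‖act y u‖ ≤ ‖y‖ * ‖u‖ := by
    intro y u
    calc ‖act y u‖ ≤ ‖uf u • y‖ + ‖sm y (us u)‖ := norm_add_le _ _
      _ ≤ ‖uf u‖ * ‖y‖ + ‖y‖ * ‖us u‖ := by
          gcongr
          · rw [norm_smul]
          · exact hb y (us u)
      _ = ‖y‖ * (‖uf u‖ + ‖us u‖) := by ring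
      _ = ‖y‖ * ‖u‖ := by rw [unorm]
  have hact_cont : Continuous (fun p : X × UA A => act p.1 p.2) := by
    have h1 : Continuous (fun p : X × UA A => uf p.2 • p.1) := by
      have : Continuous (fun p : X × UA A => ufL p.2) := ufL.continuous.comp continuous_snd
      exact this.smul continuous_fst
    have h2 : Continuous (fun p : X × UA A => sm p.1 (us p.2)) := by
      have : Continuous (fun p : X × UA A => (p.1, usL p.2)) :=
        continuous_fst.prodMk (usL.continuous.comp continuous_snd)
      exact (ContinuousLinearMap.continuous₂ sm).comp this
    exact h1.add h2
  -- elements of the right form stay in the class where the BAI acts as identity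
  have claimV : ∀ (α : ℂ) (b : A),
      Tendsto (fun e => sm (α • x + sm x b) e) l (𝓝 (α • x + sm x b)) := by
    intro α b
    have h1 : ∀ e, sm (α • x + sm x b) e = α • sm x e + sm x (b * e) := by
      intro e
      simp [map_add, map_smul, ContinuousLinearMap.add_apply,
        ContinuousLinearMap.smul_apply, hsm x b e]
    have h2 : Tendsto (fun e => α • sm x e + sm x (b * e)) l (𝓝 (α • x + sm x b)) := by
      exact ((hx.const_smul α).add (((sm x).continuous.tendsto b).comp (hmul b)))
    exact h2.congr (fun e => (h1 e).symm)
  -- constants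
  set c : ℝ := (2 * (C + 1))⁻¹ with hc_def
  have hC0 : (0:ℝ) < C := lt_of_lt_of_le one_pos hC1
  have hc0 : 0 < c := by positivity
  have hc4 : c ≤ 1/4 := by
    rw [hc_def]
    have h4 : (4:ℝ) ≤ 2 * (C + 1) := by linarith
    calc (2 * (C + 1))⁻¹ ≤ ((4:ℝ))⁻¹ := by
          apply inv_anti₀ (by norm_num) h4
      _ = 1/4 := by norm_num
  have h1c : (0:ℝ) < 1 - c := by linarith
  have h1clt : 1 - c < 1 := by linarith
  have hgam : c / (1 - c) * C ≤ 1/2 := by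
    have hkey : c * (2*C+1) ≤ 1 := by
      rw [hc_def, inv_mul_le_iff₀ (by positivity)]
      linarith
    rw [div_mul_eq_mul_div, div_le_iff₀ h1c]
    nlinarith
  -- the key inductive step
  have key : ∀ (n : ℕ) (v : (UA A)ˣ), uf (v : UA A) = (((1-c)^n : ℝ) : ℂ) →
      ∃ v' : (UA A)ˣ,
        uf (v' : UA A) = (((1-c)^(n+1) : ℝ) : ℂ) ∧
        ‖(v' : UA A) - (v : UA A)‖ ≤ (C+1) * (1-c)^n ∧
        ‖act x ((v'⁻¹ : (UA A)ˣ) : UA A) - act x ((v⁻¹ : (UA A)ˣ) : UA A)‖ ≤ (1/2)^n := by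
    intro n v hv
    set b : A := us (v : UA A) with hbdef
    set M : ℝ := ‖((v⁻¹ : (UA A)ˣ) : UA A)‖ with hMdef
    have hM0 : 0 ≤ M := norm_nonneg _
    set δ : ℝ := (8*c*M + 1)⁻¹ with hδdef
    have hδ0 : 0 < δ := by positivity
    set ε : ℝ := (1/2)^n / (c * (1-c)^n * 8 * M + 1) with hεdef
    have hε0 : 0 < ε := by positivity
    set xv : X := act x ((v⁻¹ : (UA A)ˣ) : UA A) with hxvdef
    have hxvV : Tendsto (fun e => sm xv e) l (𝓝 xv) := claimV _ _
    have h2 : ∀ᶠ e in l, ‖b - e * b‖ ≤ δ := by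
      have h := (hmul' b).eventually (Metric.closedBall_mem_nhds b hδ0)
      filter_upwards [h] with e he
      rw [dist_eq_norm] at he
      rw [norm_sub_rev]
      exact he
    have h3 : ∀ᶠ e in l, ‖xv - sm xv e‖ ≤ ε := by
      have h := hxvV.eventually (Metric.closedBall_mem_nhds xv hε0)
      filter_upwards [h] with e he
      rw [dist_eq_norm] at he
      rw [norm_sub_rev]
      exact he
    obtain ⟨e, heC, heb, hee⟩ := (hCb.and (h2.and h3)).exists
    -- the unit (1-c)•1 + c•ι e
    set t : UA A := -((((c/(1-c) : ℝ)) : ℂ) • ui e) with htdef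
    have htnorm : ‖t‖ ≤ 1/2 := by
      rw [htdef, norm_neg, norm_smul, ui_norm]
      have h1 : ‖(((c/(1-c) : ℝ)) : ℂ)‖ = c/(1-c) := by
        rw [Complex.norm_real, Real.norm_eq_abs, abs_of_nonneg (by positivity)]
      rw [h1]
      calc c/(1-c) * ‖e‖ ≤ c/(1-c) * C :=
            mul_le_mul_of_nonneg_left heC (by positivity)
        _ ≤ 1/2 := hgam
    have hts : ‖t‖ < 1 := lt_of_le_of_lt htnorm (by norm_num)
    set su : (UA A)ˣ := Units.oneSub t hts with hsudef
    have hsu_inv : ‖((su⁻¹ : (UA A)ˣ) : UA A)‖ ≤ 2 := by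
      have h1 : ((su⁻¹ : (UA A)ˣ) : UA A) = ∑' k : ℕ, t^k := rfl
      rw [h1]
      have h2 := tsum_geometric_le_of_norm_lt_one t hts
      rw [norm_one] at h2
      have h3 : (1 - ‖t‖)⁻¹ ≤ 2 := by
        have h4 : (1:ℝ)/2 ≤ 1 - ‖t‖ := by linarith
        calc (1 - ‖t‖)⁻¹ ≤ ((1:ℝ)/2)⁻¹ := inv_anti₀ (by norm_num) h4
          _ = 2 := by norm_num
      linarith
    have h1cC : ((1 - c : ℝ) : ℂ) ≠ 0 := by
      exact_mod_cast ne_of_gt h1c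
    set zu : (UA A)ˣ :=
      { val := algebraMap ℂ (UA A) ((1-c : ℝ) : ℂ),
        inv := algebraMap ℂ (UA A) (((1-c : ℝ) : ℂ))⁻¹,
        val_inv := by rw [← map_mul, mul_inv_cancel₀ h1cC, map_one],
        inv_val := by rw [← map_mul, inv_mul_cancel₀ h1cC, map_one] } with hzudef
    have hzu_inv : ‖((zu⁻¹ : (UA A)ˣ) : UA A)‖ ≤ 2 := by
      have h1 : ((zu⁻¹ : (UA A)ˣ) : UA A) = algebraMap ℂ (UA A) (((1-c : ℝ) : ℂ))⁻¹ := rfl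
      rw [h1, Algebra.algebraMap_eq_smul_one, norm_smul, norm_one, mul_one, norm_inv]
      rw [Complex.norm_real, Real.norm_eq_abs, abs_of_nonneg (le_of_lt h1c)]
      have h4 : (1:ℝ)/2 ≤ 1 - c := by linarith
      calc (1 - c)⁻¹ ≤ ((1:ℝ)/2)⁻¹ := inv_anti₀ (by norm_num) h4
        _ = 2 := by norm_num
    set uu : (UA A)ˣ := zu * su with huudef
    have huuval : (uu : UA A) = ((1-c : ℝ) : ℂ) • 1 + ((c : ℝ) : ℂ) • ui e := by
      have h1 : (uu : UA A) = algebraMap ℂ (UA A) ((1-c : ℝ) : ℂ) * (1 - t) := rfl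
      rw [h1, htdef, Algebra.algebraMap_eq_smul_one]
      have hsc : ((1-c : ℝ) : ℂ) * ((c/(1-c) : ℝ) : ℂ) = ((c : ℝ) : ℂ) := by
        have hne2 : (1 : ℂ) - (c:ℂ) ≠ 0 := by exact_mod_cast ne_of_gt h1c
        push_cast
        rw [mul_comm, div_mul_cancel₀ _ hne2]
      rw [smul_mul_assoc, one_mul, smul_sub, smul_neg, smul_smul, hsc, sub_neg_eq_add]
    have huu_inv : ‖((uu⁻¹ : (UA A)ˣ) : UA A)‖ ≤ 4 := by
      have h1 : ((uu⁻¹ : (UA A)ˣ) : UA A)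
          = ((su⁻¹ : (UA A)ˣ) : UA A) * ((zu⁻¹ : (UA A)ˣ) : UA A) := by
        rw [huudef, mul_inv_rev, Units.val_mul]
      rw [h1]
      calc ‖((su⁻¹ : (UA A)ˣ) : UA A) * ((zu⁻¹ : (UA A)ˣ) : UA A)‖
          ≤ ‖((su⁻¹ : (UA A)ˣ) : UA A)‖ * ‖((zu⁻¹ : (UA A)ˣ) : UA A)‖ := norm_mul_le _ _
        _ ≤ 2 * 2 := by
            apply mul_le_mul hsu_inv hzu_inv (norm_nonneg _) (by norm_num)
        _ = 4 := by norm_num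
    set s₀ : A := b - e * b with hs0def
    set r : UA A := -((((c : ℝ)) : ℂ) •
      (((v⁻¹ : (UA A)ˣ) : UA A) * (((uu⁻¹ : (UA A)ˣ) : UA A) * ui s₀))) with hrdef
    have hcnorm : ‖(((c : ℝ)) : ℂ)‖ = c := by
      rw [Complex.norm_real, Real.norm_eq_abs, abs_of_nonneg hc0.le]
    have hrnorm : ‖r‖ ≤ 1/2 := by
      rw [hrdef, norm_neg, norm_smul, hcnorm]
      have h1 : ‖((v⁻¹ : (UA A)ˣ) : UA A) * (((uu⁻¹ : (UA A)ˣ) : UA A) * ui s₀)‖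
          ≤ M * (4 * δ) := by
        calc ‖((v⁻¹ : (UA A)ˣ) : UA A) * (((uu⁻¹ : (UA A)ˣ) : UA A) * ui s₀)‖
            ≤ M * ‖((uu⁻¹ : (UA A)ˣ) : UA A) * ui s₀‖ := by
              rw [hMdef]; exact norm_mul_le _ _
          _ ≤ M * (‖((uu⁻¹ : (UA A)ˣ) : UA A)‖ * ‖(ui s₀ : UA A)‖) :=
              mul_le_mul_of_nonneg_left (norm_mul_le _ _) hM0
          _ ≤ M * (4 * δ) := by
              apply mul_le_mul_of_nonneg_left _ hM0
              apply mul_le_mul huu_inv _ (norm_nonneg _) (by norm_num)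
              rw [ui_norm]
              exact heb
      have hδ1 : δ * (8*c*M + 1) = 1 := inv_mul_cancel₀ (by positivity)
      have h2 : c * (M * (4 * δ)) ≤ 1/2 := by nlinarith [hδ0.le, hM0, hc0.le]
      calc c * ‖((v⁻¹ : (UA A)ˣ) : UA A) * (((uu⁻¹ : (UA A)ˣ) : UA A) * ui s₀)‖
          ≤ c * (M * (4 * δ)) := mul_le_mul_of_nonneg_left h1 hc0.le
        _ ≤ 1/2 := h2
    have hrlt : ‖r‖ < 1 := lt_of_le_of_lt hrnorm (by norm_num)
    set wu : (UA A)ˣ := Units.oneSub r hrlt with hwudef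
    have hwu_inv : ‖((wu⁻¹ : (UA A)ˣ) : UA A)‖ ≤ 2 := by
      have h1 : ((wu⁻¹ : (UA A)ˣ) : UA A) = ∑' k : ℕ, r^k := rfl
      rw [h1]
      have h2 := tsum_geometric_le_of_norm_lt_one r hrlt
      rw [norm_one] at h2
      have h3 : (1 - ‖r‖)⁻¹ ≤ 2 := by
        have h4 : (1:ℝ)/2 ≤ 1 - ‖r‖ := by linarith
        calc (1 - ‖r‖)⁻¹ ≤ ((1:ℝ)/2)⁻¹ := inv_anti₀ (by norm_num) h4
          _ = 2 := by norm_num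
      linarith
    set v'' : UA A := (v : UA A) + ((c * (1-c)^n : ℝ) : ℂ) • (ui e - 1) with hv''def
    have hvdecomp : (v : UA A) = (((1-c)^n : ℝ) : ℂ) • 1 + ui b := by
      apply uext
      · simp [hv]
      · simp [hbdef]
    have hassoc : ((uu : UA A) * (v : UA A)) *
        (((v⁻¹ : (UA A)ˣ) : UA A) * (((uu⁻¹ : (UA A)ˣ) : UA A) * ui s₀)) = ui s₀ := by
      rw [mul_assoc ((uu : UA A)) ((v : UA A)),
        ← mul_assoc ((v : UA A)) (((v⁻¹ : (UA A)ˣ) : UA A)), Units.mul_inv, one_mul,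
        ← mul_assoc, Units.mul_inv, one_mul]
    have hval : v'' = ((uu * v * wu : (UA A)ˣ) : UA A) := by
      have h1 : ((uu * v * wu : (UA A)ˣ) : UA A) = (uu : UA A) * (v : UA A) * (1 - r) := rfl
      have h2 : (uu : UA A) * (v : UA A) * r = -((((c : ℝ)) : ℂ) • ui s₀) := by
        rw [hrdef, mul_neg, mul_smul_comm, hassoc]
      rw [h1, mul_sub, mul_one, h2, sub_neg_eq_add]
      rw [huuval, hvdecomp, hv''def, hs0def, hvdecomp]
      refine uext ?_ ?_
      · simp only [uf_add, uf_mul, uf_smul, uf_one, uf_ui, uf_sub, us_add, us_mul, us_smul,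
          us_one, us_ui, us_sub, smul_zero, add_zero, zero_add, mul_zero, zero_mul, mul_one,
          smul_add, smul_sub, smul_smul, zero_smul, smul_mul_assoc]
        push_cast
        ring
      · simp only [uf_add, uf_mul, uf_smul, uf_one, uf_ui, uf_sub, us_add, us_mul, us_smul,
          us_one, us_ui, us_sub, smul_zero, add_zero, zero_add, mul_zero, zero_mul, mul_one,
          smul_add, smul_sub, smul_smul, zero_smul, smul_mul_assoc]
        push_cast
        module
    set v' : (UA A)ˣ := (uu * v * wu).copy v'' hval (((uu * v * wu)⁻¹ : (UA A)ˣ) : UA A) rfl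
      with hv'def
    have hv'val : (v' : UA A) = v'' := rfl
    have hv'inv : ((v'⁻¹ : (UA A)ˣ) : UA A) = (((uu * v * wu)⁻¹ : (UA A)ˣ) : UA A) := rfl
    have hv'invnorm : ‖((v'⁻¹ : (UA A)ˣ) : UA A)‖ ≤ 8 * M := by
      rw [hv'inv]
      have h1 : ((uu * v * wu)⁻¹ : (UA A)ˣ) = wu⁻¹ * (v⁻¹ * uu⁻¹) := by
        rw [mul_inv_rev, mul_inv_rev]
      rw [h1, Units.val_mul, Units.val_mul]
      calc ‖((wu⁻¹ : (UA A)ˣ) : UA A) * (((v⁻¹ : (UA A)ˣ) : UA A) * ((uu⁻¹ : (UA A)ˣ) : UA A))‖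
          ≤ ‖((wu⁻¹ : (UA A)ˣ) : UA A)‖ *
            ‖((v⁻¹ : (UA A)ˣ) : UA A) * ((uu⁻¹ : (UA A)ˣ) : UA A)‖ := norm_mul_le _ _
        _ ≤ 2 * ‖((v⁻¹ : (UA A)ˣ) : UA A) * ((uu⁻¹ : (UA A)ˣ) : UA A)‖ :=
            mul_le_mul_of_nonneg_right hwu_inv (norm_nonneg _)
        _ ≤ 2 * (‖((v⁻¹ : (UA A)ˣ) : UA A)‖ * ‖((uu⁻¹ : (UA A)ˣ) : UA A)‖) :=
            mul_le_mul_of_nonneg_left (norm_mul_le _ _) (by norm_num)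
        _ ≤ 2 * (M * 4) := by
            apply mul_le_mul_of_nonneg_left _ (by norm_num)
            exact mul_le_mul_of_nonneg_left huu_inv hM0
        _ = 8 * M := by ring
    refine ⟨v', ?_, ?_, ?_⟩
    · rw [hv'val, hv''def]
      simp only [uf_add, uf_smul, uf_sub, uf_ui, uf_one, hv]
      push_cast
      ring
    · rw [hv'val, hv''def]
      have h1 : (v : UA A) + ((c * (1-c)^n : ℝ) : ℂ) • (ui e - 1) - (v : UA A)
          = ((c * (1-c)^n : ℝ) : ℂ) • (ui e - 1) := by abel
      rw [h1, norm_smul]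
      have h2 : ‖((c * (1-c)^n : ℝ) : ℂ)‖ = c * (1-c)^n := by
        rw [Complex.norm_real, Real.norm_eq_abs, abs_of_nonneg (by positivity)]
      rw [h2]
      have h3 : ‖(ui e - 1 : UA A)‖ ≤ C + 1 := by
        calc ‖(ui e - 1 : UA A)‖ ≤ ‖(ui e : UA A)‖ + ‖(1 : UA A)‖ := norm_sub_le _ _
          _ = ‖e‖ + 1 := by rw [ui_norm, norm_one]
          _ ≤ C + 1 := by linarith
      calc c * (1-c)^n * ‖(ui e - 1 : UA A)‖ ≤ c * (1-c)^n * (C+1) :=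
            mul_le_mul_of_nonneg_left h3 (by positivity)
        _ ≤ (C+1) * (1-c)^n := by
            have h5 : c * ((1-c)^n * (C+1)) ≤ 1 * ((1-c)^n * (C+1)) :=
              mul_le_mul_of_nonneg_right (by linarith) (by positivity)
            nlinarith [h5]
    · have hdiff : ((v'⁻¹ : (UA A)ˣ) : UA A) - ((v⁻¹ : (UA A)ˣ) : UA A)
          = ((v⁻¹ : (UA A)ˣ) : UA A) * (((v : UA A) - (v' : UA A)) *
            ((v'⁻¹ : (UA A)ˣ) : UA A)) := by
        rw [sub_mul, mul_sub, Units.mul_inv, mul_one, ← mul_assoc, Units.inv_mul, one_mul]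
      have hvmv' : (v : UA A) - (v' : UA A) = ((c * (1-c)^n : ℝ) : ℂ) • (1 - ui e) := by
        rw [hv'val, hv''def]
        module
      have hstep : act x ((v'⁻¹ : (UA A)ˣ) : UA A) - act x ((v⁻¹ : (UA A)ˣ) : UA A)
          = act (((c * (1-c)^n : ℝ) : ℂ) • (xv - sm xv e)) ((v'⁻¹ : (UA A)ˣ) : UA A) := by
        rw [← hact_sub, hdiff, ← mul_assoc, hact_mul, hact_mul, hvmv']
        rw [hact_smul, hact_sub, hact_one, hact_ui, ← hxvdef]
      rw [hstep]
      calc ‖act (((c * (1-c)^n : ℝ) : ℂ) • (xv - sm xv e)) ((v'⁻¹ : (UA A)ˣ) : UA A)‖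
          ≤ ‖((c * (1-c)^n : ℝ) : ℂ) • (xv - sm xv e)‖ * ‖((v'⁻¹ : (UA A)ˣ) : UA A)‖ :=
            hact_norm _ _
        _ ≤ (c * (1-c)^n * ε) * (8 * M) := by
            apply mul_le_mul _ hv'invnorm (norm_nonneg _) (by positivity)
            rw [norm_smul]
            have h2 : ‖((c * (1-c)^n : ℝ) : ℂ)‖ = c * (1-c)^n := by
              rw [Complex.norm_real, Real.norm_eq_abs, abs_of_nonneg (by positivity)]
            rw [h2]
            exact mul_le_mul_of_nonneg_left hee (by positivity)
        _ ≤ (1/2)^n := by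
            have hε1 : ε * (c * (1-c)^n * 8 * M + 1) = (1/2)^n := by
              rw [hεdef, div_mul_cancel₀]
              positivity
            nlinarith [hε0.le, mul_nonneg (mul_nonneg hc0.le (le_of_lt (pow_pos h1c n))) hM0]
  -- build the sequence of units
  choose! F hF1 hF2 hF3 using key
  set g : ℕ → (UA A)ˣ :=
    fun n => Nat.rec (motive := fun _ => (UA A)ˣ) 1 (fun k vk => F k vk) n with hgdef
  have hgs : ∀ n, g (n+1) = F n (g n) := fun n => rfl
  have hguf : ∀ n, uf ((g n : (UA A)ˣ) : UA A) = (((1-c)^n : ℝ) : ℂ) := by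
    intro n
    induction n with
    | zero => simp [hgdef]
    | succ k ih =>
      rw [hgs k]
      exact hF1 k (g k) ih
  have hd1 : ∀ n, ‖((g (n+1) : (UA A)ˣ) : UA A) - ((g n : (UA A)ˣ) : UA A)‖
      ≤ (C+1) * (1-c)^n := by
    intro n
    rw [hgs n]
    exact hF2 n (g n) (hguf n)
  have hd2 : ∀ n, ‖act x (((g (n+1))⁻¹ : (UA A)ˣ) : UA A)
      - act x (((g n)⁻¹ : (UA A)ˣ) : UA A)‖ ≤ (1/2)^n := by
    intro n
    rw [hgs n]
    exact hF3 n (g n) (hguf n)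
  have hcauchy1 : CauchySeq (fun n => ((g n : (UA A)ˣ) : UA A)) := by
    apply cauchySeq_of_le_geometric (1-c) (C+1) h1clt
    intro n
    rw [dist_eq_norm, norm_sub_rev]
    exact hd1 n
  obtain ⟨aU, haU⟩ := cauchySeq_tendsto_of_complete hcauchy1
  have hcauchy2 : CauchySeq (fun n => act x (((g n)⁻¹ : (UA A)ˣ) : UA A)) := by
    apply cauchySeq_of_le_geometric (1/2) 1 (by norm_num)
    intro n
    rw [dist_eq_norm, norm_sub_rev, one_mul]
    exact hd2 n
  obtain ⟨y, hy⟩ := cauchySeq_tendsto_of_complete hcauchy2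
  have hufaU : uf aU = 0 := by
    have h1 : Tendsto (fun n => ufL ((g n : (UA A)ˣ) : UA A)) atTop (𝓝 (ufL aU)) :=
      (ufL.continuous.tendsto aU).comp haU
    have h2 : Tendsto (fun n => (((1-c:ℝ) : ℂ))^n) atTop (𝓝 0) := by
      apply tendsto_pow_atTop_nhds_zero_of_norm_lt_one
      rw [Complex.norm_real, Real.norm_eq_abs, abs_of_nonneg h1c.le]
      exact h1clt
    have h3 : Tendsto (fun n => (((1-c:ℝ) : ℂ))^n) atTop (𝓝 (ufL aU)) := by
      apply h1.congr
      intro n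
      rw [ufL_apply, hguf n]
      push_cast
      ring
    have := tendsto_nhds_unique h3 h2
    rw [ufL_apply] at this
    exact this
  have hfact : ∀ n, x = act (act x (((g n)⁻¹ : (UA A)ˣ) : UA A)) ((g n : (UA A)ˣ) : UA A) := by
    intro n
    calc x = act x 1 := (hact_one x).symm
      _ = act x ((((g n)⁻¹ : (UA A)ˣ) : UA A) * ((g n : (UA A)ˣ) : UA A)) := by
          rw [Units.inv_mul]
      _ = act (act x (((g n)⁻¹ : (UA A)ˣ) : UA A)) ((g n : (UA A)ˣ) : UA A) :=
          hact_mul _ _ _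
  have hlim : Tendsto (fun n => act (act x (((g n)⁻¹ : (UA A)ˣ) : UA A))
      ((g n : (UA A)ˣ) : UA A)) atTop (𝓝 (act y aU)) := by
    have h1 : Tendsto (fun n => (act x (((g n)⁻¹ : (UA A)ˣ) : UA A),
        ((g n : (UA A)ˣ) : UA A))) atTop (𝓝 (y, aU)) := hy.prodMk_nhds haU
    exact (hact_cont.tendsto (y, aU)).comp h1
  have hxya : x = act y aU := by
    have h1 : Tendsto (fun _ : ℕ => x) atTop (𝓝 (act y aU)) := by
      apply hlim.congr
      intro n
      exact (hfact n).symm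
    exact (tendsto_nhds_unique h1 tendsto_const_nhds).symm
  refine ⟨us aU, y, ?_⟩
  have h2 : aU = ui (us aU) := by
    apply uext
    · simp [hufaU]
    · simp
  calc x = act y aU := hxya
    _ = act y (ui (us aU)) := by rw [← h2]
    _ = sm y (us aU) := hact_ui _ _


lemma tendsto_sm_of_mem_closure {X : Type*} [NormedAddCommGroup X] [NormedSpace ℂ X]
    (l : Filter A) [hnel : l.NeBot] {C : ℝ} (hC1 : 1 ≤ C) (hC0' : 0 < C)
    (hCb : ∀ᶠ e in l, ‖e‖ ≤ C)
    (hlim : ∀ a : A, Tendsto (fun e => a * e) l (𝓝 a))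
    (sm : X →L[ℂ] A →L[ℂ] X)
    (hsm : ∀ (y : X) (a b : A), sm (sm y a) b = sm y (a * b))
    (hb : ∀ (y : X) (a : A), ‖sm y a‖ ≤ ‖y‖ * ‖a‖)
    (i' : X) (hdense : i' ∈ closure (Set.range fun a : A => sm i' a)) :
    Tendsto (fun e => sm i' e) l (𝓝 i') := by
  rw [Metric.tendsto_nhds]
  intro ε hε
  have hε2 : (0:ℝ) < ε / (2 * (C + 1)) := by positivity
  obtain ⟨f, hfmem, hfdist⟩ := Metric.mem_closure_iff.mp hdense _ hε2
  obtain ⟨a, rfl⟩ := hfmem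
  have hε3 : (0:ℝ) < ε / (2 * (‖i'‖ + 1)) := by positivity
  have hev : ∀ᶠ e in l, ‖a * e - a‖ < ε / (2 * (‖i'‖ + 1)) := by
    have h1 := Metric.tendsto_nhds.mp (hlim a) _ hε3
    apply h1.mono
    intro e he
    rw [dist_eq_norm] at he
    exact he
  filter_upwards [hCb, hev] with e h1 h2
  rw [dist_eq_norm]
  have hdec : sm i' e - i' = sm (i' - sm i' a) e + sm i' (a * e - a) + (sm i' a - i') := by
    have e1 : sm (i' - sm i' a) e = sm i' e - sm (sm i' a) e := by
      rw [map_sub, ContinuousLinearMap.sub_apply]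
    have e2 : sm i' (a * e - a) = sm i' (a * e) - sm i' a := map_sub _ _ _
    rw [e1, e2, hsm i' a e]
    abel
  rw [hdec]
  have hb1 : ‖sm (i' - sm i' a) e‖ ≤ ‖i' - sm i' a‖ * C :=
    le_trans (hb _ _) (mul_le_mul_of_nonneg_left h1 (norm_nonneg _))
  have hb2 : ‖sm i' (a * e - a)‖ ≤ ‖i'‖ * ‖a * e - a‖ := hb _ _
  have hd1 : ‖i' - sm i' a‖ < ε / (2 * (C + 1)) := by
    rw [← dist_eq_norm]
    exact hfdist
  have hd2 : ‖sm i' a - i'‖ < ε / (2 * (C + 1)) := by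
    rw [norm_sub_rev]
    exact hd1
  calc ‖sm (i' - sm i' a) e + sm i' (a * e - a) + (sm i' a - i')‖
      ≤ ‖sm (i' - sm i' a) e‖ + ‖sm i' (a * e - a)‖ + ‖sm i' a - i'‖ :=
        norm_add₃_le
    _ < ε := by
        have hc1 : ‖sm (i' - sm i' a) e‖ ≤ (ε / (2 * (C + 1))) * C := by
          apply le_trans hb1
          apply mul_le_mul_of_nonneg_right hd1.le (by positivity)
        have hc2 : ‖sm i' (a * e - a)‖ < ε / 2 := by
          apply lt_of_le_of_lt hb2
          calc ‖i'‖ * ‖a * e - a‖ ≤ (‖i'‖ + 1) * ‖a * e - a‖ := by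
                apply mul_le_mul_of_nonneg_right _ (norm_nonneg _)
                linarith [norm_nonneg i']
            _ < (‖i'‖ + 1) * (ε / (2 * (‖i'‖ + 1))) := by
                apply mul_lt_mul_of_pos_left h2 (by positivity)
            _ = ε / 2 := by
                field_simp
        have hc3 : (ε / (2 * (C + 1))) * C + ε / (2 * (C + 1)) = ε / 2 := by
          field_simp
        linarith

lemma sepW {E : Type*} [NormedAddCommGroup E] [NormedSpace ℂ E] (W : Submodule ℂ E)
    (hW : IsClosed (W : Set E)) (x : E) (hx : x ∉ W) :
    ∃ m : StrongDual ℂ E, (∀ w ∈ W, m w = 0) ∧ m x ≠ 0 := by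
  have hmk : (Submodule.Quotient.mk x : E ⧸ W) ≠ 0 := by
    rw [Ne, Submodule.Quotient.mk_eq_zero]
    exact hx
  obtain ⟨g, hg1, hg2⟩ := exists_dual_vector ℂ (Submodule.Quotient.mk x : E ⧸ W) (norm_ne_zero_iff.mpr hmk)
  set mkC : E →L[ℂ] (E ⧸ W) :=
    LinearMap.mkContinuous W.mkQ 1 (fun f => by
      rw [one_mul]
      exact Submodule.Quotient.norm_mk_le W f)
  refine ⟨g.comp mkC, fun w hw => ?_, ?_⟩
  · have h2 : mkC w = 0 := (Submodule.Quotient.mk_eq_zero W).mpr hw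
    rw [ContinuousLinearMap.comp_apply, h2, map_zero]
  · have h1 : g.comp mkC x = ((‖(Submodule.Quotient.mk x : E ⧸ W)‖ : ℝ) : ℂ) := hg2
    rw [h1]
    have h2 : ‖(Submodule.Quotient.mk x : E ⧸ W)‖ ≠ 0 := norm_ne_zero_iff.mpr hmk
    exact_mod_cast h2

lemma trAdj_apply {X Y Z : Type*} [NormedAddCommGroup X] [NormedSpace ℂ X]
    [NormedAddCommGroup Y] [NormedSpace ℂ Y] [NormedAddCommGroup Z] [NormedSpace ℂ Z]
    (f : X →L[ℂ] Y →L[ℂ] Z) (z' : StrongDual ℂ Z) (x : X) (y : Y) :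
    trAdj f z' x y = z' (f x y) := rfl

/-- If `A` is a Banach algebra with a bounded approximate identity,
`I` a closed two-sided ideal, and the left module action `π_l : A × I → I` is Arens
regular (i.e. `π_l***(a'', ·) : I** → I**` is weak*-weak* continuous for every
`a'' ∈ A**`), then `I*` factors on the left: `I* = I*·A`, where
`⟨j'·a, i⟩ = ⟨j', a i⟩`. -/
theorem dual_factors_left_of_arensRegular [CompleteSpace A] (hBAI : HasBAI A)
    (I : Submodule ℂ A) (hI : IsClosedTwoSidedIdeal I)
    (pl : A →L[ℂ] I →L[ℂ] I)
    (hpl : ∀ (a : A) (i : I), (pl a i : A) = a * (i : A))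
    (hreg : ∀ a'' : StrongDual ℂ (StrongDual ℂ A),
      Continuous fun m : WeakDual ℂ (StrongDual ℂ I) =>
        StrongDual.toWeakDual (arens3 pl a'' (WeakDual.toStrongDual m))) :
    ∀ i' : StrongDual ℂ I, ∃ (a : A) (j' : StrongDual ℂ I),
      ∀ i : I, i' i = j' ⟨a * (i : A), hI.mul_left a i.2⟩ := by
  intro i'
  obtain ⟨l, hnel, ⟨C0, hC0⟩, hlim⟩ := hBAI
  haveI := hnel
  set C : ℝ := max C0 1 with hCdef
  have hC1 : (1:ℝ) ≤ C := le_max_right _ _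
  have hC0' : (0:ℝ) < C := lt_of_lt_of_le one_pos hC1
  have hCb : ∀ᶠ e in l, ‖e‖ ≤ C := hC0.mono (fun e he => le_trans he (le_max_left _ _))
  set sm : StrongDual ℂ I →L[ℂ] A →L[ℂ] StrongDual ℂ I := trAdj pl with hsmdef
  have hsm_apply : ∀ (j' : StrongDual ℂ I) (a : A) (i : I), sm j' a i = j' (pl a i) :=
    fun _ _ _ => rfl
  have hplmul : ∀ (a b : A) (i : I), pl a (pl b i) = pl (a*b) i := by
    intro a b i
    apply Subtype.ext
    rw [hpl, hpl, hpl, mul_assoc]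
  have hsm : ∀ (y : StrongDual ℂ I) (a b : A), sm (sm y a) b = sm y (a * b) := by
    intro y a b
    ext i
    show (sm y a) (pl b i) = y (pl (a*b) i)
    rw [hsm_apply, hplmul]
  have hpl_norm : ∀ (a : A) (i : I), ‖pl a i‖ ≤ ‖a‖ * ‖i‖ := by
    intro a i
    have h1 : ‖pl a i‖ = ‖((pl a i : I) : A)‖ := rfl
    rw [h1, hpl]
    exact norm_mul_le _ _
  have hb : ∀ (y : StrongDual ℂ I) (a : A), ‖sm y a‖ ≤ ‖y‖ * ‖a‖ := by
    intro y a
    apply ContinuousLinearMap.opNorm_le_bound _ (by positivity)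
    intro i
    rw [hsm_apply]
    calc ‖y (pl a i)‖ ≤ ‖y‖ * ‖pl a i‖ := y.le_opNorm _
      _ ≤ ‖y‖ * (‖a‖ * ‖i‖) := mul_le_mul_of_nonneg_left (hpl_norm a i) (norm_nonneg y)
      _ = ‖y‖ * ‖a‖ * ‖i‖ := by ring
  -- a weak-star cluster point of the b.a.i. in the bidual
  set κA : A →L[ℂ] StrongDual ℂ (StrongDual ℂ A) := inclusionInDoubleDual ℂ A with hκAdef
  have hκ : ∀ e : A, ‖κA e‖ ≤ ‖e‖ := by
    intro e
    apply ContinuousLinearMap.opNorm_le_bound _ (norm_nonneg e)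
    intro x'
    rw [hκAdef, dual_def]
    calc ‖x' e‖ ≤ ‖x'‖ * ‖e‖ := x'.le_opNorm e
      _ = ‖e‖ * ‖x'‖ := by ring
  set lF : Filter (WeakDual ℂ (StrongDual ℂ A)) :=
    Filter.map (fun e => StrongDual.toWeakDual (κA e)) l with hlFdef
  haveI : lF.NeBot := hnel.map _
  have hsub : lF ≤ Filter.principal (WeakDual.toStrongDual ⁻¹' Metric.closedBall 0 C) := by
    rw [Filter.le_principal_iff, hlFdef, Filter.mem_map]
    apply Filter.mem_of_superset hCb
    intro e he
    simp only [Set.mem_preimage, Metric.mem_closedBall, Set.mem_setOf_eq]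
    exact le_trans (le_of_eq (dist_zero_right (κA e))) (le_trans (hκ e) he)
  obtain ⟨Ew, -, hEw⟩ := (WeakDual.isCompact_closedBall 0 C).exists_clusterPt hsub
  set E : StrongDual ℂ (StrongDual ℂ A) := WeakDual.toStrongDual Ew with hEdef
  have keyE : ∀ (ψ : StrongDual ℂ A) (w : ℂ), Tendsto (fun e => ψ e) l (𝓝 w) → E ψ = w := by
    intro ψ w hw
    have h1 : ClusterPt (Ew ψ) (Filter.map (fun mm : WeakDual ℂ (StrongDual ℂ A) => mm ψ) lF) :=
      hEw.map (WeakDual.eval_continuous ψ).continuousAt Filter.tendsto_map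
    have h2 : Filter.map (fun mm : WeakDual ℂ (StrongDual ℂ A) => mm ψ) lF
        = Filter.map (fun e => ψ e) l := by
      rw [hlFdef, Filter.map_map]
      rfl
    rw [h2] at h1
    exact eq_of_nhds_neBot (h1.mono hw)
  -- density of the factorizable functionals
  have hdense : i' ∈ closure (Set.range fun a : A => sm i' a) := by
    by_contra hnd
    set W : Submodule ℂ (StrongDual ℂ I) :=
      (LinearMap.range ((sm i').toLinearMap)).topologicalClosure with hWdef
    haveI : IsClosed (W : Set (StrongDual ℂ I)) := Submodule.isClosed_topologicalClosure _
    have hWset : (W : Set (StrongDual ℂ I)) = closure (Set.range fun a => sm i' a) := by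
      rw [hWdef, Submodule.topologicalClosure_coe, LinearMap.coe_range]
      rfl
    have hiW : i' ∉ W := fun hmem => hnd (hWset ▸ hmem)
    obtain ⟨m, hm0', hm1⟩ := sepW W (Submodule.isClosed_topologicalClosure _) i' hiW
    have hm0 : ∀ a : A, m (sm i' a) = 0 := by
      intro a
      have h1 : sm i' a ∈ W := by
        rw [hWdef]
        exact Submodule.le_topologicalClosure _ (LinearMap.mem_range_self _ a)
      exact hm0' _ h1
    -- the functional mm ↦ mm i' - (arens3 pl E mm) i' vanishes
    set Lmap : StrongDual ℂ (StrongDual ℂ I) →ₗ[ℂ] ℂ :=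
      { toFun := fun mm => mm i' - arens3 pl E mm i',
        map_add' := by
          intro p q
          simp only [ContinuousLinearMap.add_apply, map_add]
          ring,
        map_smul' := by
          intro cc p
          simp only [ContinuousLinearMap.smul_apply, map_smul, smul_eq_mul, RingHom.id_apply]
          ring } with hLdef
    have hLcont : Continuous fun mm : WeakDual ℂ (StrongDual ℂ I) => Lmap mm := by
      have h1 : Continuous fun mm : WeakDual ℂ (StrongDual ℂ I) => mm i' :=
        WeakDual.eval_continuous i'
      have h2 : Continuous fun mm : WeakDual ℂ (StrongDual ℂ I) =>
          (arens3 pl E (WeakDual.toStrongDual mm)) i' :=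
        (WeakDual.eval_continuous i').comp (hreg E)
      exact h1.sub h2
    obtain ⟨z, hz⟩ := weakdual_rep (Y := StrongDual ℂ I) Lmap hLcont
    have hz0 : ∀ i : I, z i = 0 := by
      intro i
      have h1 := hz (inclusionInDoubleDual ℂ I i)
      have h2 : Lmap (inclusionInDoubleDual ℂ I i) = 0 := by
        have h3 : arens3 pl E (inclusionInDoubleDual ℂ I i) i'
            = E (trAdj (trAdj pl) (inclusionInDoubleDual ℂ I i) i') := rfl
        have h4 : E (trAdj (trAdj pl) (inclusionInDoubleDual ℂ I i) i') = i' i := by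
          apply keyE
          have h5 : Tendsto (fun e => pl e i) l (𝓝 i) := by
            rw [tendsto_subtype_rng]
            exact ((hlim (i : A)).2).congr (fun e => (hpl e i).symm)
          have h6 : Tendsto (fun e => i' (pl e i)) l (𝓝 (i' i)) :=
            (i'.continuous.tendsto i).comp h5
          exact h6
        show (inclusionInDoubleDual ℂ I i) i' - arens3 pl E (inclusionInDoubleDual ℂ I i) i' = 0
        rw [h3, h4, dual_def]
        ring
      rw [h2] at h1
      have h7 : (inclusionInDoubleDual ℂ I i) z = z i := dual_def ℂ I i z
      rw [← h7, ← h1]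
    have hz0' : z = 0 := by
      apply ContinuousLinearMap.ext
      intro i
      rw [hz0 i, ContinuousLinearMap.zero_apply]
    have hLm : Lmap m = 0 := by
      rw [hz m, hz0', map_zero]
    have harens : arens3 pl E m i' = 0 := by
      have h3 : arens3 pl E m i' = E (trAdj (trAdj pl) m i') := rfl
      have h4 : trAdj (trAdj pl) m i' = 0 := by
        apply ContinuousLinearMap.ext
        intro a
        show m (sm i' a) = 0
        exact hm0 a
      rw [h3, h4, map_zero]
    have : m i' = 0 := by
      have h8 : m i' - arens3 pl E m i' = 0 := hLm
      rw [harens, sub_zero] at h8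
      exact h8
    exact hm1 this
  clear_value sm
  have hx : Tendsto (fun e => sm i' e) l (𝓝 i') :=
    tendsto_sm_of_mem_closure (X := StrongDual ℂ I) l hC1 hC0' hCb (fun a => (hlim a).1) sm hsm hb i' hdense
  obtain ⟨a, y, hxy⟩ := cohen_factorization (X := StrongDual ℂ I) l hC1 hCb (fun a => (hlim a).1)
    (fun a => (hlim a).2) sm hsm hb i' hx
  refine ⟨a, y, fun i => ?_⟩
  have h1 : pl a i = ⟨a * (i : A), hI.mul_left a i.2⟩ := Subtype.ext (hpl a i)
  calc i' i = sm y a i := by rw [← hxy]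
    _ = y (pl a i) := hsm_apply y a i
    _ = y ⟨a * (i : A), hI.mul_left a i.2⟩ := by rw [h1]

end
end

section
/- Let A be a Banach algebra with a right unit element, and suppose A = B ⊕ I where B is a closed unital subalgebra and I is a closed two-sided ideal contained in the right annihilators of A (i.e., A·I = {0}). Then for every closed two-sided ideal J in B, the set J ⊕ I is a closed two-sided ideal in A. -/
open NormedSpace

noncomputable section

variable {A : Type*} [NonUnitalNormedRing A] [NormedSpace ℂ A]
  [IsScalarTower ℂ A A] [SMulCommClass ℂ A A]

/-! Left multiplication by the unit `u` of `B` is the projection of `A = B ⊕ I` onto `B`, because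
`u (b + i) = u b + u i = b` as `A · I = 0`. Hence `J ⊔ I` is the preimage of `J` under
`x ↦ u x`, which is closed, and the ideal property follows from `u (a x) = (u a) (u x)` and
`u (x a) = (u x) (u a)` (as `y - u y ∈ I` is killed by left multiplication), products of an
element of `B` and an element of `J`. -/

section AnnihilatorSplitting

variable {𝕜 R : Type*} [Semiring 𝕜] [NonUnitalRing R] [Module 𝕜 R]

structure IsAnnihilatorSplitting (B I : Submodule 𝕜 R) (u : R) : Prop where
  left_unit : ∀ b ∈ B, u * b = b
  mul_eq_zero : ∀ a : R, ∀ i ∈ I, a * i = 0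
  exists_add : ∀ a : R, ∃ b ∈ B, ∃ i ∈ I, a = b + i

namespace IsAnnihilatorSplitting

variable {B I J : Submodule 𝕜 R} {u : R}

theorem mul_add_eq (h : IsAnnihilatorSplitting B I u) {b i : R} (hb : b ∈ B) (hi : i ∈ I) :
    u * (b + i) = b := by
  rw [mul_add, h.left_unit b hb, h.mul_eq_zero u i hi, add_zero]

theorem mul_mem (h : IsAnnihilatorSplitting B I u) (a : R) : u * a ∈ B := by
  obtain ⟨b, hb, i, hi, rfl⟩ := h.exists_add a
  rwa [h.mul_add_eq hb hi]

theorem sub_mul_mem (h : IsAnnihilatorSplitting B I u) (a : R) : a - u * a ∈ I := by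
  obtain ⟨b, hb, i, hi, rfl⟩ := h.exists_add a
  rwa [h.mul_add_eq hb hi, add_sub_cancel_left]

theorem mul_mul_eq (h : IsAnnihilatorSplitting B I u) (a x : R) : a * (u * x) = a * x := by
  have := h.mul_eq_zero a _ (h.sub_mul_mem x)
  rwa [mul_sub, sub_eq_zero, eq_comm] at this

theorem mem_sup_iff (h : IsAnnihilatorSplitting B I u) (hJB : J ≤ B) {x : R} :
    x ∈ J ⊔ I ↔ u * x ∈ J := by
  constructor
  · intro hx
    obtain ⟨j, hj, i, hi, rfl⟩ := Submodule.mem_sup.1 hx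
    rwa [h.mul_add_eq (hJB hj) hi]
  · intro hx
    rw [← add_sub_cancel (u * x) x]
    exact Submodule.add_mem_sup hx (h.sub_mul_mem x)

theorem isClosed_sup [TopologicalSpace R] [ContinuousMul R] (h : IsAnnihilatorSplitting B I u)
    (hJB : J ≤ B) (hJ : IsClosed (J : Set R)) :
    IsClosed ((J ⊔ I : Submodule 𝕜 R) : Set R) := by
  have hpre : ((J ⊔ I : Submodule 𝕜 R) : Set R) = (u * ·) ⁻¹' J :=
    Set.ext fun _ => h.mem_sup_iff hJB
  exact hpre ▸ hJ.preimage (continuous_const_mul u)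

theorem mul_mem_sup (h : IsAnnihilatorSplitting B I u) (hJB : J ≤ B)
    (hJideal : ∀ b ∈ B, ∀ j ∈ J, b * j ∈ J ∧ j * b ∈ J) (a : R) {x : R} (hx : x ∈ J ⊔ I) :
    a * x ∈ J ⊔ I ∧ x * a ∈ J ⊔ I := by
  rw [h.mem_sup_iff hJB] at hx ⊢
  rw [h.mem_sup_iff hJB, ← mul_assoc, ← mul_assoc, ← h.mul_mul_eq (u * x) a,
    ← h.mul_mul_eq (u * a) x]
  exact ⟨(hJideal _ (h.mul_mem a) _ hx).1, (hJideal _ (h.mul_mem a) _ hx).2⟩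

end IsAnnihilatorSplitting

end AnnihilatorSplitting

theorem sup_closed_ideal_general
    (B I : Submodule ℂ A)
    (hBunit : ∃ u ∈ B, ∀ b ∈ B, u * b = b ∧ b * u = b)
    (hann : ∀ a : A, ∀ i ∈ I, a * i = 0)
    (hsum : ∀ a : A, ∃ b ∈ B, ∃ i ∈ I, a = b + i)
    (J : Submodule ℂ A) (hJB : J ≤ B) (hJclosed : IsClosed (J : Set A))
    (hJideal : ∀ b ∈ B, ∀ j ∈ J, b * j ∈ J ∧ j * b ∈ J) :
    IsClosed ((J ⊔ I : Submodule ℂ A) : Set A) ∧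
    ∀ a : A, ∀ x ∈ (J ⊔ I : Submodule ℂ A),
      a * x ∈ (J ⊔ I : Submodule ℂ A) ∧ x * a ∈ (J ⊔ I : Submodule ℂ A) := by
  obtain ⟨u, -, hu⟩ := hBunit
  have h : IsAnnihilatorSplitting B I u := ⟨fun b hb => (hu b hb).1, hann, hsum⟩
  exact ⟨h.isClosed_sup hJB hJclosed, fun a _ hx => h.mul_mem_sup hJB hJideal a hx⟩

/-- Let `A` be a Banach algebra with a right unit, `A = B ⊕ I`
with `B` a closed unital subalgebra and `I` a closed two-sided ideal contained in
the right annihilators of `A` (`A·I = {0}`).  Then for every closed two-sided ideal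
`J` of `B`, the subspace `J ⊕ I` is a closed two-sided ideal of `A`. -/
theorem sup_closed_ideal [CompleteSpace A]
    (B I : Submodule ℂ A)
    (hBclosed : IsClosed (B : Set A))
    (hBmul : ∀ x ∈ B, ∀ y ∈ B, x * y ∈ B)
    (hBunit : ∃ u ∈ B, ∀ b ∈ B, u * b = b ∧ b * u = b)
    (hI : IsClosedTwoSidedIdeal I)
    (hann : ∀ a : A, ∀ i ∈ I, a * i = 0)
    (hsum : ∀ a : A, ∃ b ∈ B, ∃ i ∈ I, a = b + i)
    (hdisj : ∀ x : A, x ∈ B → x ∈ I → x = 0)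
    (hrunit : ∃ e : A, ∀ x : A, x * e = x)
    (J : Submodule ℂ A) (hJB : J ≤ B) (hJclosed : IsClosed (J : Set A))
    (hJideal : ∀ b ∈ B, ∀ j ∈ J, b * j ∈ J ∧ j * b ∈ J) :
    IsClosed ((J ⊔ I : Submodule ℂ A) : Set A) ∧
    ∀ a : A, ∀ x ∈ (J ⊔ I : Submodule ℂ A),
      a * x ∈ (J ⊔ I : Submodule ℂ A) ∧ x * a ∈ (J ⊔ I : Submodule ℂ A) :=
  sup_closed_ideal_general B I hBunit hann hsum J hJB hJclosed hJideal
end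
end

section
/- Let A be a Banach algebra with a right unit, and A = B ⊕ I for a closed unital subalgebra B and a closed two-sided ideal I contained in the right annihilators of A (A·I = {0}). If A is ideally amenable, then B is ideally amenable. -/
open NormedSpace

noncomputable section

variable {A : Type*} [NonUnitalNormedRing A] [NormedSpace ℂ A]
  [IsScalarTower ℂ A A] [SMulCommClass ℂ A A]

/-! Since `A·I = 0`, the projection `π : A = B ⊕ I → B` is multiplicative, and it is continuous by
the open mapping theorem, so `B` is a retract of `A`. For a closed ideal `J` of `B`, `π⁻¹(J) = J ⊕ I`
is a closed ideal of `A`, and a derivation `D : B → J*` pulls back along `π` to a derivation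
`A → (J ⊕ I)*`. An element `ξ` implementing the pullback, restricted along `ι`, implements `D`. -/

theorem exists_continuous_projection_of_directSum {𝕜 E F : Type*} [NontriviallyNormedField 𝕜]
    [NormedAddCommGroup E] [NormedSpace 𝕜 E] [CompleteSpace E]
    [NormedAddCommGroup F] [NormedSpace 𝕜 F] [CompleteSpace F]
    (ι : F →L[𝕜] E) (I : Submodule 𝕜 E) (hI : IsClosed (I : Set E))
    (hsum : ∀ a : E, ∃ b : F, ∃ i ∈ I, a = ι b + i)
    (hdisj : ∀ (b : F) (i : E), i ∈ I → ι b + i = 0 → b = 0) :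
    ∃ π : E →L[𝕜] F,
      (∀ b, π (ι b) = b) ∧ (∀ x ∈ I, π x = 0) ∧ ∀ a, a - ι (π a) ∈ I := by
  have : CompleteSpace I := hI.completeSpace_coe
  let φ : F × I →L[𝕜] E := ι.coprod I.subtypeL
  have hφ : ∀ p : F × I, φ p = ι p.1 + p.2 := fun _ => rfl
  have hinj : Function.Injective φ := by
    refine (injective_iff_map_eq_zero φ).2 fun p hp => ?_
    have h1 : p.1 = 0 := hdisj p.1 p.2 p.2.2 hp
    rw [hφ, h1, map_zero, zero_add] at hp
    exact Prod.ext h1 (Subtype.ext hp)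
  have hsurj : Function.Surjective φ := fun a => by
    obtain ⟨b, i, hi, rfl⟩ := hsum a
    exact ⟨(b, ⟨i, hi⟩), rfl⟩
  let ψ := ContinuousLinearEquiv.ofBijective φ (LinearMap.ker_eq_bot.2 hinj)
    (LinearMap.range_eq_top.2 hsurj)
  have hψ : ∀ p, ψ.symm (φ p) = p := ψ.symm_apply_apply
  refine ⟨(ContinuousLinearMap.fst 𝕜 F I).comp (ψ.symm : E →L[𝕜] F × I), fun b => ?_,
    fun x hx => ?_, fun a => ?_⟩
  · simpa [hφ] using congrArg Prod.fst (hψ (b, 0))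
  · simpa [hφ] using congrArg Prod.fst (hψ (0, ⟨x, hx⟩))
  · have ha : a - ι (ψ.symm a).1 = (ψ.symm a).2 :=
      sub_eq_iff_eq_add'.2 (ψ.apply_symm_apply a).symm
    show a - ι (ψ.symm a).1 ∈ I
    exact ha ▸ (ψ.symm a).2.2

theorem map_mul_of_annihilated_complement {R S : Type*} [NonUnitalRing R] [NonUnitalRing S]
    (π : R →+ S) (ι : S → R) (hιmul : ∀ x y : S, ι (x * y) = ι x * ι y) (I : Set R)
    (hIright : ∀ (a : R) ⦃x : R⦄, x ∈ I → x * a ∈ I) (hann : ∀ a : R, ∀ i ∈ I, a * i = 0)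
    (hπι : ∀ b, π (ι b) = b) (hπI : ∀ x ∈ I, π x = 0) (hdecomp : ∀ a, a - ι (π a) ∈ I)
    (a a' : R) : π (a * a') = π a * π a' := by
  have key : a * a' = (a - ι (π a)) * a' + ι (π a * π a') := by
    have h : ι (π a) * (a' - ι (π a')) = 0 := hann _ _ (hdecomp a')
    rw [mul_sub, sub_eq_zero] at h
    rw [hιmul, ← h, sub_mul, sub_add_cancel]
  rw [key, map_add, hπI _ (hIright a' (hdecomp a)), zero_add, hπι]

section Retract

omit [IsScalarTower ℂ A A] [SMulCommClass ℂ A A]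

variable {B : Type*} [NonUnitalNormedRing B] [NormedSpace ℂ B]
  (π : A →L[ℂ] B) (hπ : ∀ x y : A, π (x * y) = π x * π y) {J : Submodule ℂ B}
include hπ

theorem IsClosedTwoSidedIdeal.comap (hJ : IsClosedTwoSidedIdeal J) :
    IsClosedTwoSidedIdeal (J.comap (π : A →ₗ[ℂ] B)) where
  isClosed := hJ.isClosed.preimage π.continuous
  mul_left a x hx := by
    simpa only [Submodule.mem_comap, ContinuousLinearMap.coe_coe, hπ] using hJ.mul_left _ hx
  mul_right a x hx := by
    simpa only [Submodule.mem_comap, ContinuousLinearMap.coe_coe, hπ] using hJ.mul_right _ hx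

omit hπ in
def comapRestrict (J : Submodule ℂ B) : J.comap (π : A →ₗ[ℂ] B) →L[ℂ] J :=
  (π.comp (Submodule.subtypeL _)).codRestrict J fun k => k.2

omit hπ in
/-- `a ↦ D (π a) ∘ comapRestrict π J`. -/
def pullbackDerivation (D : B →L[ℂ] StrongDual ℂ J) :
    A →L[ℂ] StrongDual ℂ (J.comap (π : A →ₗ[ℂ] B)) :=
  (((ContinuousLinearMap.compL ℂ _ J ℂ).flip (comapRestrict π J)).comp D).comp π

theorem IsIdealDerivation.pullback (hJ : IsClosedTwoSidedIdeal J) {D : B →L[ℂ] StrongDual ℂ J}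
    (hD : IsIdealDerivation J hJ D) :
    IsIdealDerivation _ (hJ.comap π hπ) (pullbackDerivation π D) := by
  intro a b k
  have h := hD (π a) (π b) (comapRestrict π J k)
  simp only [pullbackDerivation, ContinuousLinearMap.comp_apply, ContinuousLinearMap.flip_apply,
    ContinuousLinearMap.compL_apply, hπ] at h ⊢
  convert h using 3 <;> exact Subtype.ext (hπ _ _)

theorem IsInnerIdealDerivation.of_pullback (hJ : IsClosedTwoSidedIdeal J) (ι : B →L[ℂ] A)
    (hιmul : ∀ x y : B, ι (x * y) = ι x * ι y) (hπι : ∀ b, π (ι b) = b)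
    {D : B →L[ℂ] StrongDual ℂ J}
    (hD : IsInnerIdealDerivation _ (hJ.comap π hπ) (pullbackDerivation π D)) :
    IsInnerIdealDerivation J hJ D := by
  obtain ⟨ξ, hξ⟩ := hD
  let σ : J →L[ℂ] J.comap (π : A →ₗ[ℂ] B) :=
    (ι.comp (Submodule.subtypeL J)).codRestrict _ fun j => by
      simpa only [Submodule.mem_comap, ContinuousLinearMap.coe_coe,
        ContinuousLinearMap.comp_apply, Submodule.subtypeL_apply, hπι] using j.2
  refine ⟨ξ.comp σ, fun b j => ?_⟩
  have hτσ : comapRestrict π J (σ j) = j := Subtype.ext (hπι j)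
  have h := hξ (ι b) (σ j)
  simp only [pullbackDerivation, ContinuousLinearMap.comp_apply, ContinuousLinearMap.flip_apply,
    ContinuousLinearMap.compL_apply, hπι, hτσ] at h
  rw [h, ContinuousLinearMap.comp_apply, ContinuousLinearMap.comp_apply]
  congr 2 <;> exact Subtype.ext (hιmul _ _).symm

theorem IdeallyAmenable.of_retract [IsScalarTower ℂ A A] [SMulCommClass ℂ A A]
    [IsScalarTower ℂ B B] [SMulCommClass ℂ B B]
    (ι : B →L[ℂ] A) (hιmul : ∀ x y : B, ι (x * y) = ι x * ι y) (hπι : ∀ b, π (ι b) = b) (hA : IdeallyAmenable A) : IdeallyAmenable B :=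
  fun _ hJ _ hD =>
    (hA _ (hJ.comap π hπ) _ (hD.pullback π hπ hJ)).of_pullback π hπ hJ ι hιmul hπι

end Retract

theorem ideallyAmenable_of_directSummand_general [CompleteSpace A]
    {B : Type*} [NormedRing B] [NormedAlgebra ℂ B] [CompleteSpace B]
    (ι : B →L[ℂ] A)
    (hιmul : ∀ x y : B, ι (x * y) = ι x * ι y)
    (I : Submodule ℂ A) (hI : IsClosedTwoSidedIdeal I)
    (hann : ∀ a : A, ∀ i ∈ I, a * i = 0)
    (hsum : ∀ a : A, ∃ b : B, ∃ i ∈ I, a = ι b + i)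
    (hdisj : ∀ (b : B) (i : A), i ∈ I → ι b + i = 0 → b = 0)
    (hA : IdeallyAmenable A) :
    IdeallyAmenable B := by
  obtain ⟨π, hπι, hπI, hdecomp⟩ :=
    exists_continuous_projection_of_directSum ι I hI.isClosed hsum hdisj
  have hπ : ∀ x y : A, π (x * y) = π x * π y :=
    map_mul_of_annihilated_complement π.toLinearMap.toAddMonoidHom ι hιmul I hI.mul_right hann
      hπι hπI hdecomp
  exact hA.of_retract π hπ ι hιmul hπι

/-- Let `A` be a Banach algebra with a right unit,
`A = B ⊕ I` where `B` is a closed unital Banach subalgebra (realized via a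
continuous injective algebra embedding `ι : B → A` with closed range) and `I` is a
closed two-sided ideal contained in the right annihilators of `A` (`A·I = {0}`).
If `A` is ideally amenable, then `B` is ideally amenable. -/
theorem ideallyAmenable_of_directSummand [CompleteSpace A]
    {B : Type*} [NormedRing B] [NormedAlgebra ℂ B] [CompleteSpace B]
    (ι : B →L[ℂ] A)
    (hιmul : ∀ x y : B, ι (x * y) = ι x * ι y)
    (hιinj : Function.Injective ι)
    (hιclosed : IsClosed (Set.range ι))
    (I : Submodule ℂ A) (hI : IsClosedTwoSidedIdeal I)
    (hann : ∀ a : A, ∀ i ∈ I, a * i = 0)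
    (hsum : ∀ a : A, ∃ b : B, ∃ i ∈ I, a = ι b + i)
    (hdisj : ∀ (b : B) (i : A), i ∈ I → ι b + i = 0 → b = 0)
    (hrunit : ∃ e : A, ∀ x : A, x * e = x)
    (hA : IdeallyAmenable A) :
    IdeallyAmenable B :=
  ideallyAmenable_of_directSummand_general ι hιmul I hI hann hsum hdisj hA
end
end

section
/- Let A be a Banach algebra with a right unit, and A = B ⊕ I as above with A·I = {0}. Let π : A → B be the projection homomorphism, J a closed two-sided ideal of B, and D : B → J* a continuous derivation. Then the map D̄ = (π|_{J⊕I})* ∘ D ∘ π : A → (J ⊕ I)* is a continuous derivation. -/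
open NormedSpace

noncomputable section

variable {A : Type*} [NonUnitalNormedRing A] [NormedSpace ℂ A]
  [IsScalarTower ℂ A A] [SMulCommClass ℂ A A]

section Projection

variable {R : Type*} [NonUnitalRing R] {B I : Set R} {π : R → R}

theorem sub_apply_mem_of_apply_add (hsum : ∀ a : R, ∃ b ∈ B, ∃ i ∈ I, a = b + i)
    (hπ : ∀ b ∈ B, ∀ i ∈ I, π (b + i) = b) (a : R) : a - π a ∈ I := by
  obtain ⟨b, hb, i, hi, rfl⟩ := hsum a
  rwa [hπ b hb i hi, add_sub_cancel_left]

/-- Since `R` annihilates `I`, `a c = a π(c)`; splitting `a = π(a) + (a - π(a))`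
then writes `a c` as an element of `B` plus an element of `I`. -/
theorem apply_mul_of_annihilator (hsum : ∀ a : R, ∃ b ∈ B, ∃ i ∈ I, a = b + i)
    (hπ : ∀ b ∈ B, ∀ i ∈ I, π (b + i) = b) (hπB : ∀ a : R, π a ∈ B)
    (hBmul : ∀ x ∈ B, ∀ y ∈ B, x * y ∈ B)
    (hImul : ∀ (a : R) ⦃x : R⦄, x ∈ I → x * a ∈ I)
    (hann : ∀ a : R, ∀ i ∈ I, a * i = 0) (a c : R) : π (a * c) = π a * π c := by
  have hac : a * c = π a * π c + (a - π a) * π c := by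
    calc a * c = a * π c + a * (c - π c) := by rw [mul_sub, add_sub_cancel]
      _ = a * π c := by rw [hann a _ (sub_apply_mem_of_apply_add hsum hπ c), add_zero]
      _ = π a * π c + (a - π a) * π c := by rw [sub_mul, add_sub_cancel]
  rw [hac, hπ _ (hBmul _ (hπB a) _ (hπB c)) _
    (hImul (π c) (sub_apply_mem_of_apply_add hsum hπ a))]

end Projection

section Lift

variable {E : Type*} [NonUnitalNormedRing E] [NormedSpace ℂ E] {B J K : Submodule ℂ E}
  (π : E →L[ℂ] E) (hπB : ∀ a : E, π a ∈ B) (hπJ : ∀ z ∈ K, π z ∈ J)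

/-- `D̄ = (π|_K)* ∘ D ∘ π`, the transpose `(π|_K)*` being `ContinuousLinearMap.precomp`. -/
def liftedDerivation (D : B →L[ℂ] StrongDual ℂ J) : E →L[ℂ] StrongDual ℂ K :=
  (((π.comp K.subtypeL).codRestrict J fun z => hπJ z z.2).precomp ℂ).comp
    (D.comp (π.codRestrict B hπB))

theorem liftedDerivation_apply (D : B →L[ℂ] StrongDual ℂ J) (a : E) (z : K) :
    liftedDerivation π hπB hπJ D a z = D ⟨π a, hπB a⟩ ⟨π z, hπJ z z.2⟩ :=
  rfl

theorem isIdealDerivation_liftedDerivation (hK : IsClosedTwoSidedIdeal K)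
    (hBmul : ∀ x ∈ B, ∀ y ∈ B, x * y ∈ B)
    (hJideal : ∀ b ∈ B, ∀ j ∈ J, b * j ∈ J ∧ j * b ∈ J)
    (hπmul : ∀ a c : E, π (a * c) = π a * π c) (D : B →L[ℂ] StrongDual ℂ J)
    (hD : ∀ b b' : B, ∀ j : J,
      D ⟨(b : E) * (b' : E), hBmul b b.2 b' b'.2⟩ j =
        D b' ⟨(j : E) * (b : E), (hJideal b b.2 j j.2).2⟩ +
          D b ⟨(b' : E) * (j : E), (hJideal b' b'.2 j j.2).1⟩) :
    IsIdealDerivation K hK (liftedDerivation π hπB hπJ D) := by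
  intro a b z
  simp only [liftedDerivation_apply]
  convert hD ⟨π a, hπB a⟩ ⟨π b, hπB b⟩ ⟨π z, hπJ z z.2⟩ using 3 <;>
    exact Subtype.ext (hπmul _ _)

end Lift

theorem lifted_derivation_general
    (B I : Submodule ℂ A)
    (hBmul : ∀ x ∈ B, ∀ y ∈ B, x * y ∈ B)
    (hI : IsClosedTwoSidedIdeal I)
    (hann : ∀ a : A, ∀ i ∈ I, a * i = 0)
    (hsum : ∀ a : A, ∃ b ∈ B, ∃ i ∈ I, a = b + i)
    (J : Submodule ℂ A)
    (hJideal : ∀ b ∈ B, ∀ j ∈ J, b * j ∈ J ∧ j * b ∈ J)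
    (hK : IsClosedTwoSidedIdeal (J ⊔ I : Submodule ℂ A))
    (π : A →L[ℂ] A)
    (hπ : ∀ b ∈ B, ∀ i ∈ I, π (b + i) = b)
    (hπB : ∀ a : A, π a ∈ B)
    (hπJ : ∀ z : A, z ∈ (J ⊔ I : Submodule ℂ A) → π z ∈ J)
    (D : B →L[ℂ] StrongDual ℂ J)
    (hD : ∀ b b' : B, ∀ j : J,
      D ⟨(b : A) * (b' : A), hBmul b b.2 b' b'.2⟩ j =
        D b' ⟨(j : A) * (b : A), (hJideal b b.2 j j.2).2⟩ +
          D b ⟨(b' : A) * (j : A), (hJideal b' b'.2 j j.2).1⟩) :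
    ∃ Dbar : A →L[ℂ] StrongDual ℂ (J ⊔ I : Submodule ℂ A),
      (∀ (a : A) (z : (J ⊔ I : Submodule ℂ A)),
        Dbar a z = D ⟨π a, hπB a⟩ ⟨π z, hπJ z z.2⟩) ∧
      IsIdealDerivation (J ⊔ I : Submodule ℂ A) hK Dbar := by
  have hπmul : ∀ a c : A, π (a * c) = π a * π c :=
    apply_mul_of_annihilator (B := B) (I := I) hsum hπ hπB hBmul hI.mul_right hann
  exact ⟨liftedDerivation π hπB hπJ D, liftedDerivation_apply π hπB hπJ D,
    isIdealDerivation_liftedDerivation π hπB hπJ hK hBmul hJideal hπmul D hD⟩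

/-- In the setting `A = B ⊕ I` (with `A·I = {0}`, `π : A → B`
the projection homomorphism, `J` a closed two-sided ideal of `B`, and
`D : B → J*` a continuous derivation), the lifted map
`D̄ = (π|_{J⊕I})* ∘ D ∘ π : A → (J ⊕ I)*`, given by
`⟨D̄ a, z⟩ = ⟨D(π a), π z⟩`, is a continuous derivation. -/
theorem lifted_derivation [CompleteSpace A]
    (B I : Submodule ℂ A)
    (hBclosed : IsClosed (B : Set A))
    (hBmul : ∀ x ∈ B, ∀ y ∈ B, x * y ∈ B)
    (hBunit : ∃ u ∈ B, ∀ b ∈ B, u * b = b ∧ b * u = b)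
    (hI : IsClosedTwoSidedIdeal I)
    (hann : ∀ a : A, ∀ i ∈ I, a * i = 0)
    (hsum : ∀ a : A, ∃ b ∈ B, ∃ i ∈ I, a = b + i)
    (hdisj : ∀ x : A, x ∈ B → x ∈ I → x = 0)
    (hrunit : ∃ e : A, ∀ x : A, x * e = x)
    (J : Submodule ℂ A) (hJB : J ≤ B) (hJclosed : IsClosed (J : Set A))
    (hJideal : ∀ b ∈ B, ∀ j ∈ J, b * j ∈ J ∧ j * b ∈ J)
    (hK : IsClosedTwoSidedIdeal (J ⊔ I : Submodule ℂ A))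
    (π : A →L[ℂ] A)
    (hπ : ∀ b ∈ B, ∀ i ∈ I, π (b + i) = b)
    (hπB : ∀ a : A, π a ∈ B)
    (hπJ : ∀ z : A, z ∈ (J ⊔ I : Submodule ℂ A) → π z ∈ J)
    (D : B →L[ℂ] StrongDual ℂ J)
    (hD : ∀ b b' : B, ∀ j : J,
      D ⟨(b : A) * (b' : A), hBmul b b.2 b' b'.2⟩ j =
        D b' ⟨(j : A) * (b : A), (hJideal b b.2 j j.2).2⟩ +
          D b ⟨(b' : A) * (j : A), (hJideal b' b'.2 j j.2).1⟩) :
    ∃ Dbar : A →L[ℂ] StrongDual ℂ (J ⊔ I : Submodule ℂ A),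
      (∀ (a : A) (z : (J ⊔ I : Submodule ℂ A)),
        Dbar a z = D ⟨π a, hπB a⟩ ⟨π z, hπJ z z.2⟩) ∧
      IsIdealDerivation (J ⊔ I : Submodule ℂ A) hK Dbar :=
  lifted_derivation_general B I hBmul hI hann hsum J hJideal hK π hπ hπB hπJ D hD
end
end

section
/- Let G be a discrete group and I₀ a codimension-1 closed two-sided ideal of ℓ¹(G). Then ℓ¹(G) is I₀-weakly amenable, i.e., every continuous derivation D : ℓ¹(G) → I₀* is inner. -/
/-!
A codimension-one closed ideal `I` of `ℓ¹(G)` is the kernel of a continuous character `φ`, so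
the projections `δₓ - φ(δₓ) δ₁` of the point masses span a dense subspace of `I`. A derivation
`D : ℓ¹(G) → I*` gives the functionals `T_g = D(δ_g)(· δ_g⁻¹)` on `I`, a 1-cocycle for
conjugation by the `δ_g`; evaluated on the spanning vectors it is a bounded cocycle for the
conjugation action of `G` on itself. Such a cocycle vanishes on stabilizers (it is additive along
powers and bounded), hence is the coboundary of a bounded function `Θ` on `G`, built orbit by
orbit. Pairing `ℓ¹(G)` with `Θ` gives the functional `ξ ∈ I*` whose inner derivation is `D`.
-/

open NormedSpace

noncomputable section

variable {A : Type*} [NonUnitalNormedRing A] [NormedSpace ℂ A]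
  [IsScalarTower ℂ A A] [SMulCommClass ℂ A A]

namespace IsClosedTwoSidedIdeal

variable {I : Submodule ℂ A} (hI : IsClosedTwoSidedIdeal I)

def mulLeftL (a : A) : I →L[ℂ] I :=
  ((ContinuousLinearMap.mul ℂ A a).comp I.subtypeL).codRestrict I fun i => hI.mul_left a i.2

def mulRightL (b : A) : I →L[ℂ] I :=
  (((ContinuousLinearMap.mul ℂ A).flip b).comp I.subtypeL).codRestrict I fun i =>
    hI.mul_right b i.2

@[simp]
lemma coe_mulLeftL_apply (a : A) (i : I) : (hI.mulLeftL a i : A) = a * i := rfl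

@[simp]
lemma coe_mulRightL_apply (b : A) (i : I) : (hI.mulRightL b i : A) = i * b := rfl

lemma norm_mulRightL_le (b : A) : ‖hI.mulRightL b‖ ≤ ‖b‖ :=
  ContinuousLinearMap.opNorm_le_bound _ (norm_nonneg b) fun i => by
    rw [mul_comm]
    exact norm_mul_le (i : A) b

end IsClosedTwoSidedIdeal

namespace L1GroupAlgebra

section BoundedCocycle

variable {G X E : Type*} [Group G] [MulAction G X] {F : G → X → E}

lemma cocycle_pow_apply_of_smul_eq [AddCancelCommMonoid E]
    (hF : ∀ g h x, F (g * h) x = F h x + F g (h • x)) {s : G} {x : X} (hs : s • x = x)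
    (n : ℕ) : F (s ^ n) x = n • F s x := by
  induction n with
  | zero => simpa using hF 1 1 x
  | succ n ih => rw [pow_succ, hF, hs, ih, succ_nsmul, add_comm]

variable [NormedAddCommGroup E] [NormedSpace ℝ E] {K : ℝ}

lemma cocycle_apply_eq_zero_of_smul_eq (hF : ∀ g h x, F (g * h) x = F h x + F g (h • x))
    (hK : ∀ g x, ‖F g x‖ ≤ K) {s : G} {x : X} (hs : s • x = x) : F s x = 0 := by
  by_contra hne
  have hpos : 0 < ‖F s x‖ := norm_pos_iff.mpr hne
  obtain ⟨n, hn⟩ := exists_nat_gt (K / ‖F s x‖)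
  have hle : (n : ℝ) * ‖F s x‖ ≤ K := by
    simpa [cocycle_pow_apply_of_smul_eq hF hs n, RCLike.norm_nsmul ℝ] using hK (s ^ n) x
  linarith [(div_lt_iff₀ hpos).mp hn]

theorem exists_bounded_eq_sub_smul_of_cocycle (hF : ∀ g h x, F (g * h) x = F h x + F g (h • x))
    (hK : ∀ g x, ‖F g x‖ ≤ K) :
    ∃ Θ : X → E, (∀ x, ‖Θ x‖ ≤ K) ∧ ∀ g x, F g x = Θ x - Θ (g • x) := by
  let r : X → X := fun x => (Quotient.mk (MulAction.orbitRel G X) x).out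
  have hr_smul : ∀ (g : G) x, r (g • x) = r x := fun g x =>
    congrArg Quotient.out (Quotient.sound ⟨g, rfl⟩)
  have hr : ∀ x, ∃ t : G, t • r x = x := fun x => by
    obtain ⟨t, ht⟩ := Quotient.mk_out (s := MulAction.orbitRel G X) x
    exact ⟨t⁻¹, inv_smul_eq_iff.mpr ht.symm⟩
  choose t ht using hr
  refine ⟨fun x => -F (t x) (r x), fun x => by simpa using hK _ _, fun g x => ?_⟩
  -- `g * t x = t (g • x) * s` with `s` in the stabilizer of `r x`, where `F` vanishes
  have hfix : ((t (g • x))⁻¹ * (g * t x)) • r x = r x := by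
    rw [mul_smul, mul_smul, ht, ← hr_smul g x, inv_smul_eq_iff, ht]
  have h₁ := hF (t (g • x)) ((t (g • x))⁻¹ * (g * t x)) (r x)
  rw [mul_inv_cancel_left, hfix, cocycle_apply_eq_zero_of_smul_eq hF hK hfix, zero_add] at h₁
  have h₂ := hF g (t x) (r x)
  rw [ht] at h₂
  simp only [hr_smul g x, ← h₁, h₂]
  abel

end BoundedCocycle

lemma exists_linearMap_ker_eq_of_codim_one {K V : Type*} [Field K] [AddCommGroup V] [Module K V]
    {I : Submodule K V} {a₀ : V} (hspan : ∀ x : V, ∃ c : K, x - c • a₀ ∈ I) {b : V} (hb : b ∉ I) :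
    ∃ f : V →ₗ[K] K, (∀ x, x ∈ I ↔ f x = 0) ∧ f b = 1 := by
  obtain ⟨f, hfb, hmap⟩ := I.exists_dual_map_eq_bot_of_notMem hb inferInstance
  have hfI : ∀ x ∈ I, f x = 0 := fun x hx => LinearMap.le_ker_iff_map.mpr hmap hx
  have hf_apply : ∀ x, f x = (hspan x).choose * f a₀ := fun x => by
    have := hfI _ (hspan x).choose_spec
    rwa [map_sub, map_smul, smul_eq_mul, sub_eq_zero] at this
  have ha₀ : f a₀ ≠ 0 := fun h => hfb (by rw [hf_apply, h, mul_zero])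
  refine ⟨(f b)⁻¹ • f, fun x => ⟨fun hx => ?_, fun hx => ?_⟩, inv_mul_cancel₀ hfb⟩
  · simp [hfI x hx]
  · have hc : (hspan x).choose = 0 := by
      simpa [hfb, hf_apply x, ha₀] using hx
    simpa [hc] using (hspan x).choose_spec

omit [IsScalarTower ℂ A A] in
lemma exists_character_of_codim_one {one : A} (mul_one : ∀ a : A, a * one = a)
    {I : Submodule ℂ A} (hI : IsClosedTwoSidedIdeal I) {a₀ : A} (ha₀ : a₀ ∉ I)
    (hspan : ∀ x : A, ∃ c : ℂ, x - c • a₀ ∈ I) :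
    ∃ φ : A →L[ℂ] ℂ, (∀ x, x ∈ I ↔ φ x = 0) ∧ φ one = 1 ∧ ∀ x y, φ (x * y) = φ x * φ y := by
  have hone : one ∉ I := fun h => ha₀ (mul_one a₀ ▸ hI.mul_left a₀ h)
  obtain ⟨f, hker, hf1⟩ := exists_linearMap_ker_eq_of_codim_one hspan hone
  have hcont : Continuous f := f.continuous_of_isClosed_ker <| by
    convert hI.isClosed
    ext x
    exact (hker x).symm
  have hsub : ∀ x, x - f x • one ∈ I := fun x => (hker _).2 (by simp [hf1])
  refine ⟨⟨f, hcont⟩, hker, hf1, fun x y => ?_⟩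
  have hxy : x * y - (f x * f y) • one = x * (y - f y • one) + f y • (x - f x • one) := by
    rw [mul_sub, mul_smul_comm, mul_one, smul_sub, smul_smul, mul_comm (f y)]
    abel
  have hmem : x * y - (f x * f y) • one ∈ I := by
    rw [hxy]
    exact add_mem (hI.mul_left x (hsub y)) (I.smul_mem _ (hsub x))
  simpa [hf1, sub_eq_zero] using (hker _).1 hmem

section Projection

variable {I : Submodule ℂ A} (one : A) {φ : A →L[ℂ] ℂ} (hφ : ∀ x, x ∈ I ↔ φ x = 0)
  (h1 : φ one = 1)

def projKer : A →L[ℂ] I :=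
  (ContinuousLinearMap.id ℂ A - φ.smulRight one).codRestrict I fun a => (hφ _).2 (by simp [h1])

omit [IsScalarTower ℂ A A] [SMulCommClass ℂ A A] in
lemma coe_projKer_apply (a : A) : (projKer one hφ h1 a : A) = a - φ a • one := rfl

omit [IsScalarTower ℂ A A] [SMulCommClass ℂ A A] in
lemma projKer_coe (i : I) : projKer one hφ h1 i = i :=
  Subtype.ext <| by simp [coe_projKer_apply, (hφ i).1 i.2]

omit [IsScalarTower ℂ A A] [SMulCommClass ℂ A A] in
lemma dense_span_image_projKer {s : Set A} (hs : Dense (Submodule.span ℂ s : Set A)) :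
    Dense (Submodule.span ℂ (projKer one hφ h1 '' s) : Set I) := by
  have hsurj : Function.Surjective (projKer one hφ h1) := fun i => ⟨i, projKer_coe one hφ h1 i⟩
  exact (hsurj.denseRange.dense_image (projKer one hφ h1).continuous hs).mono
    (Submodule.image_span_subset_span (projKer one hφ h1 : A →ₗ[ℂ] I) s)

end Projection

lemma isInnerIdealDerivation_of_dense_span {I : Submodule ℂ A} (hI : IsClosedTwoSidedIdeal I)
    (D : A →L[ℂ] StrongDual ℂ I) {s : Set A} (hs : Dense (Submodule.span ℂ s : Set A))
    (ξ : StrongDual ℂ I) (h : ∀ a ∈ s, ∀ i, D a i = ξ (hI.mulRightL a i) - ξ (hI.mulLeftL a i)) :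
    IsInnerIdealDerivation I hI D := by
  refine ⟨ξ, fun a i => ?_⟩
  let inner : A →L[ℂ] ℂ :=
    ξ.comp ((ContinuousLinearMap.mul ℂ A i).codRestrict I fun b => hI.mul_right b i.2)
      - ξ.comp (((ContinuousLinearMap.mul ℂ A).flip i).codRestrict I fun b => hI.mul_left b i.2)
  have : (ContinuousLinearMap.apply ℂ ℂ i).comp D = inner :=
    ContinuousLinearMap.ext_on hs fun b hb => h b hb i
  exact congr($this a)

section Pairing

variable {G : Type*}

lemma summable_norm_lpOne (f : lp (fun _ : G => ℂ) 1) : Summable fun x => ‖f x‖ := by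
  have h := (lp.memℓp f).summable (p := 1) (by simp)
  simp only [ENNReal.toReal_one, Real.rpow_one] at h
  exact h

lemma tsum_norm_lpOne (f : lp (fun _ : G => ℂ) 1) : ∑' x, ‖f x‖ = ‖f‖ := by
  have h := lp.hasSum_norm (p := 1) (by simp) f
  simp only [ENNReal.toReal_one, Real.rpow_one] at h
  exact h.tsum_eq

variable {Θ : G → ℂ} {C : ℝ}

lemma norm_mul_le_of_bounded (hΘ : ∀ x, ‖Θ x‖ ≤ C) (f : lp (fun _ : G => ℂ) 1) (x : G) :
    ‖f x * Θ x‖ ≤ ‖f x‖ * C := by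
  rw [norm_mul]
  exact mul_le_mul_of_nonneg_left (hΘ x) (norm_nonneg _)

lemma summable_mul_of_bounded (hΘ : ∀ x, ‖Θ x‖ ≤ C) (f : lp (fun _ : G => ℂ) 1) :
    Summable fun x => f x * Θ x :=
  .of_norm_bounded ((summable_norm_lpOne f).mul_right C) (norm_mul_le_of_bounded hΘ f)

def lpOnePairing (hΘ : ∀ x, ‖Θ x‖ ≤ C) : lp (fun _ : G => ℂ) 1 →L[ℂ] ℂ :=
  LinearMap.mkContinuous
    { toFun := fun f => ∑' x, f x * Θ x
      map_add' := fun f f' => by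
        rw [← (summable_mul_of_bounded hΘ f).tsum_add (summable_mul_of_bounded hΘ f')]
        simp_rw [lp.coeFn_add, Pi.add_apply, add_mul]
      map_smul' := fun c f => by
        simp_rw [lp.coeFn_smul, Pi.smul_apply, smul_eq_mul, mul_assoc, RingHom.id_apply,
          tsum_mul_left] }
    C fun f => calc
      ‖∑' x, f x * Θ x‖ ≤ ∑' x, ‖f x‖ * C :=
        tsum_of_norm_bounded ((summable_norm_lpOne f).mul_right C).hasSum
          (norm_mul_le_of_bounded hΘ f)
      _ = C * ‖f‖ := by rw [tsum_mul_right, tsum_norm_lpOne, mul_comm]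

lemma lpOnePairing_single [DecidableEq G] (hΘ : ∀ x, ‖Θ x‖ ≤ C) (g : G) :
    lpOnePairing hΘ (lp.single 1 g 1) = Θ g := by
  change ∑' x, (lp.single 1 g 1 : lp (fun _ : G => ℂ) 1) x * Θ x = Θ g
  rw [tsum_eq_single g fun x hx => by simp [hx], lp.single_apply_self, one_mul]

end Pairing

section Basis

variable {G : Type*} [DecidableEq G] (e : A ≃ₗᵢ[ℂ] lp (fun _ : G => ℂ) 1)

def delta (g : G) : A := e.symm (lp.single 1 g 1)

omit [IsScalarTower ℂ A A] [SMulCommClass ℂ A A] in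
lemma norm_delta (g : G) : ‖delta e g‖ = 1 := by
  simp [delta, lp.norm_single]

omit [IsScalarTower ℂ A A] [SMulCommClass ℂ A A] in
lemma hasSum_smul_delta (a : A) : HasSum (fun g => (e a : G → ℂ) g • delta e g) a := by
  convert (lp.hasSum_single (by simp) (e a)).map e.symm.toLinearEquiv.toAddMonoidHom
    e.symm.continuous using 2 with g
  · simp [delta, ← map_smul, ← lp.single_smul]
  · simp

omit [IsScalarTower ℂ A A] [SMulCommClass ℂ A A] in
lemma dense_span_range_delta : Dense (Submodule.span ℂ (Set.range (delta e)) : Set A) :=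
  fun a => mem_closure_of_tendsto (hasSum_smul_delta e a) <| .of_forall fun _ =>
    Submodule.sum_mem _ fun g _ => Submodule.smul_mem _ _ (Submodule.subset_span ⟨g, rfl⟩)

end Basis

-- Needed for the operator norm on `A →L[ℂ] StrongDual ℂ I`: the nested instance search does not
-- find `Submodule.normedSpace`, whose scalar ring `R` is not determined by the goal.
instance (I : Submodule ℂ A) : NormedSpace ℂ I := Submodule.normedSpace I

section Derivation

variable {G : Type*} [Group G] [DecidableEq G] (e : A ≃ₗᵢ[ℂ] lp (fun _ : G => ℂ) 1)
  {I : Submodule ℂ A} (hI : IsClosedTwoSidedIdeal I)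

def conjL (g : G) : I →L[ℂ] I := (hI.mulLeftL (delta e g)).comp (hI.mulRightL (delta e g⁻¹))

def twist (D : A →L[ℂ] StrongDual ℂ I) (g : G) : StrongDual ℂ I :=
  (D (delta e g)).comp (hI.mulRightL (delta e g⁻¹))

lemma norm_twist_le (D : A →L[ℂ] StrongDual ℂ I) (g : G) : ‖twist e hI D g‖ ≤ ‖D‖ := calc
  ‖twist e hI D g‖ ≤ ‖D (delta e g)‖ * ‖hI.mulRightL (delta e g⁻¹)‖ :=
    ContinuousLinearMap.opNorm_comp_le _ _
  _ ≤ ‖D‖ * ‖delta e g‖ * ‖delta e g⁻¹‖ :=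
    mul_le_mul (D.le_opNorm _) (hI.norm_mulRightL_le _) (norm_nonneg _) (by positivity)
  _ = ‖D‖ := by simp [norm_delta]

variable (hconv : ∀ f g : A, ∀ x : G,
    (e (f * g) : ∀ _ : G, ℂ) x = ∑' y : G, (e f : ∀ _ : G, ℂ) y * (e g : ∀ _ : G, ℂ) (y⁻¹ * x))
include hconv

omit [IsScalarTower ℂ A A] [SMulCommClass ℂ A A] in
lemma delta_mul_delta (g h : G) : delta e g * delta e h = delta e (g * h) := by
  apply e.injective
  ext x
  rw [hconv, tsum_eq_single g fun y hy => by simp [delta, hy]]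
  simp [delta, Pi.single_apply, inv_mul_eq_iff_eq_mul]

lemma mul_delta_one (a : A) : a * delta e 1 = a := by
  have h : (ContinuousLinearMap.mul ℂ A).flip (delta e 1) = ContinuousLinearMap.id ℂ A :=
    ContinuousLinearMap.ext_on (dense_span_range_delta e) <| by
      rintro _ ⟨g, rfl⟩
      simp [delta_mul_delta e hconv]
  exact congr($h a)

lemma twist_mul (D : A →L[ℂ] StrongDual ℂ I) (hD : IsIdealDerivation I hI D) (g h : G)
    (i : I) :
    twist e hI D (g * h) i = twist e hI D h i + twist e hI D g (conjL e hI h i) := by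
  simp only [twist, conjL, ContinuousLinearMap.comp_apply]
  rw [← delta_mul_delta e hconv, hD]
  congr 2 <;> ext <;> simp [mul_assoc, delta_mul_delta e hconv]

lemma apply_delta_eq_twist (D : A →L[ℂ] StrongDual ℂ I) (g : G) (i : I) :
    D (delta e g) i = twist e hI D g (hI.mulRightL (delta e g) i) := by
  simp only [twist, ContinuousLinearMap.comp_apply]
  congr
  ext
  simp [mul_assoc, delta_mul_delta e hconv, mul_delta_one e hconv]

lemma conjL_mulRightL_delta (g : G) (i : I) :
    conjL e hI g (hI.mulRightL (delta e g) i) = hI.mulLeftL (delta e g) i := by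
  ext
  simp [conjL, mul_assoc, delta_mul_delta e hconv, mul_delta_one e hconv]

omit [IsScalarTower ℂ A A] [SMulCommClass ℂ A A] in
lemma character_delta_conj {φ : A →L[ℂ] ℂ} (h1 : φ (delta e 1) = 1)
    (hmul : ∀ x y, φ (x * y) = φ x * φ y) (g x : G) :
    φ (delta e (g * x * g⁻¹)) = φ (delta e x) := by
  have hinv : φ (delta e g) * φ (delta e g⁻¹) = 1 := by
    rw [← hmul, delta_mul_delta e hconv, mul_inv_cancel, h1]
  rw [← delta_mul_delta e hconv, ← delta_mul_delta e hconv, hmul, hmul]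
  linear_combination φ (delta e x) * hinv

lemma conjL_projKer_delta {φ : A →L[ℂ] ℂ} (hφ : ∀ x, x ∈ I ↔ φ x = 0)
    (h1 : φ (delta e 1) = 1) (hmul : ∀ x y, φ (x * y) = φ x * φ y) (g x : G) :
    conjL e hI g (projKer (delta e 1) hφ h1 (delta e x))
      = projKer (delta e 1) hφ h1 (delta e (g * x * g⁻¹)) := by
  ext
  simp only [conjL, ContinuousLinearMap.comp_apply, IsClosedTwoSidedIdeal.coe_mulLeftL_apply,
    IsClosedTwoSidedIdeal.coe_mulRightL_apply, coe_projKer_apply,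
    character_delta_conj e hconv h1 hmul]
  simp [mul_sub, sub_mul, mul_assoc, smul_mul_assoc, mul_smul_comm, delta_mul_delta e hconv]

theorem exists_twist_eq_sub_conjL
    (hcodim : ∃ a₀ : A, a₀ ∉ I ∧ ∀ x : A, ∃ c : ℂ, x - c • a₀ ∈ I)
    (D : A →L[ℂ] StrongDual ℂ I) (hD : IsIdealDerivation I hI D) :
    ∃ ξ : StrongDual ℂ I, ∀ (g : G) (j : I), twist e hI D g j = ξ j - ξ (conjL e hI g j) := by
  obtain ⟨a₀, ha₀, hspan⟩ := hcodim
  obtain ⟨φ, hφ, h1, hmul⟩ := exists_character_of_codim_one (mul_delta_one e hconv) hI ha₀ hspan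
  set P := projKer (delta e 1) hφ h1
  let F : ConjAct G → G → ℂ := fun g x => twist e hI D (ConjAct.ofConjAct g) (P (delta e x))
  have hF : ∀ g h x, F (g * h) x = F h x + F g (h • x) := fun g h x => by
    simp only [F, map_mul, ConjAct.smul_def, twist_mul e hI hconv D hD,
      conjL_projKer_delta e hI hconv hφ h1 hmul, P]
  have hK : ∀ g x, ‖F g x‖ ≤ ‖D‖ * ‖P‖ := fun g x => calc
    ‖F g x‖ ≤ ‖twist e hI D (ConjAct.ofConjAct g)‖ * ‖P (delta e x)‖ :=
      ContinuousLinearMap.le_opNorm _ _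
    _ ≤ ‖D‖ * (‖P‖ * ‖delta e x‖) :=
      mul_le_mul (norm_twist_le e hI D _) (P.le_opNorm _) (norm_nonneg _) D.opNorm_nonneg
    _ = ‖D‖ * ‖P‖ := by rw [norm_delta, mul_one]
  obtain ⟨Θ, hΘ, hFΘ⟩ := exists_bounded_eq_sub_smul_of_cocycle hF hK
  let ξ : StrongDual ℂ I :=
    (lpOnePairing hΘ).comp ((e.toContinuousLinearEquiv : A →L[ℂ] lp (fun _ : G => ℂ) 1).comp
      I.subtypeL)
  have hξ : ∀ x, ξ (P (delta e x)) = Θ x - φ (delta e x) * Θ 1 := fun x => by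
    simp [ξ, P, coe_projKer_apply, delta, lpOnePairing_single]
  refine ⟨ξ, fun g => DFunLike.congr_fun (?_ : twist e hI D g = ξ - ξ.comp (conjL e hI g))⟩
  refine ContinuousLinearMap.ext_on
    (dense_span_image_projKer _ hφ h1 (dense_span_range_delta e)) ?_
  rintro _ ⟨_, ⟨x, rfl⟩, rfl⟩
  have hgx := hFΘ (ConjAct.toConjAct g) x
  simp only [F, ConjAct.ofConjAct_toConjAct, ConjAct.smul_def] at hgx
  simp only [sub_apply, ContinuousLinearMap.comp_apply, hgx,
    conjL_projKer_delta e hI hconv hφ h1 hmul, P, hξ, character_delta_conj e hconv h1 hmul]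
  ring

end Derivation

end L1GroupAlgebra

theorem l1_group_algebra_I0_weakly_amenable_general
    (G : Type*) [Group G]
    (e : A ≃ₗᵢ[ℂ] lp (fun _ : G => ℂ) 1)
    (hconv : ∀ f g : A, ∀ x : G,
      (e (f * g) : ∀ _ : G, ℂ) x = ∑' y : G, (e f : ∀ _ : G, ℂ) y * (e g : ∀ _ : G, ℂ) (y⁻¹ * x))
    (I₀ : Submodule ℂ A) (hI₀ : IsClosedTwoSidedIdeal I₀)
    (hcodim : ∃ a₀ : A, a₀ ∉ I₀ ∧ ∀ x : A, ∃ c : ℂ, x - c • a₀ ∈ I₀)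
    (D : A →L[ℂ] StrongDual ℂ I₀) (hD : IsIdealDerivation I₀ hI₀ D) :
    IsInnerIdealDerivation I₀ hI₀ D := by
  classical
  obtain ⟨ξ, hξ⟩ := L1GroupAlgebra.exists_twist_eq_sub_conjL e hI₀ hconv hcodim D hD
  refine L1GroupAlgebra.isInnerIdealDerivation_of_dense_span hI₀ D
    (L1GroupAlgebra.dense_span_range_delta e) ξ ?_
  rintro _ ⟨g, rfl⟩ i
  rw [L1GroupAlgebra.apply_delta_eq_twist e hI₀ hconv, hξ,
    L1GroupAlgebra.conjL_mulRightL_delta e hI₀ hconv]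

/-- Let `G` be a discrete group and let `A = ℓ¹(G)` be its group
algebra (a Banach algebra isometrically isomorphic as a Banach space to
`ℓ¹(G)`, with multiplication given by convolution
`(f * g)(x) = ∑_y f(y) g(y⁻¹ x)`).  If `I₀` is a codimension-1 closed two-sided
ideal of `ℓ¹(G)`, then `ℓ¹(G)` is `I₀`-weakly amenable: every continuous
derivation `D : ℓ¹(G) → I₀*` is inner. -/
theorem l1_group_algebra_I0_weakly_amenable
    [CompleteSpace A] (G : Type*) [Group G]
    (e : A ≃ₗᵢ[ℂ] lp (fun _ : G => ℂ) 1)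
    (hconv : ∀ f g : A, ∀ x : G,
      (e (f * g) : ∀ _ : G, ℂ) x = ∑' y : G, (e f : ∀ _ : G, ℂ) y * (e g : ∀ _ : G, ℂ) (y⁻¹ * x))
    (I₀ : Submodule ℂ A) (hI₀ : IsClosedTwoSidedIdeal I₀)
    (hcodim : ∃ a₀ : A, a₀ ∉ I₀ ∧ ∀ x : A, ∃ c : ℂ, x - c • a₀ ∈ I₀)
    (D : A →L[ℂ] StrongDual ℂ I₀) (hD : IsIdealDerivation I₀ hI₀ D) :
    IsInnerIdealDerivation I₀ hI₀ D :=
  l1_group_algebra_I0_weakly_amenable_general G e hconv I₀ hI₀ hcodim D hD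
end
end
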